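/- arXiv:2208.14718 — 3 statements merged into one kernel-verified Lean document; each statement's English description precedes it below -/
import Mathlib

section
/- Let x be a bi-infinite word over a finite alphabet A. The following are equivalent: (1) x is eventually dendric with threshold N; (2) x is eventually acyclic with threshold M; (2') x is eventually neutral with threshold M'; (3) x is eventually weak or neutral with threshold K. Moreover, the thresholds satisfy K ≤ M ≤ N and K ≤ M' ≤ N. -/
open List

variable {A : Type*} {B : Type*} {C : Type*}

/-- `w` is a factor of the bi-infinite word `x`. -/
def IsFactor (x : ℤ → A) (w : List A) : Prop :=
  ∃ i : ℤ, ∀ j : Fin w.length, x (i + (j : ℕ)) = w.get j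

/-- Left extensions `E⁻_x(w)`. -/
def extL (x : ℤ → A) (w : List A) : Set A := {a | IsFactor x (a :: w)}

/-- Right extensions `E⁺_x(w)`. -/
def extR (x : ℤ → A) (w : List A) : Set A := {b | IsFactor x (w ++ [b])}

/-- Bi-extensions `E_x(w)`. -/
def extB (x : ℤ → A) (w : List A) : Set (A × A) :=
  {p | IsFactor x (p.1 :: (w ++ [p.2]))}

/-- The multiplicity `m_x(w)`. -/
noncomputable def mult (x : ℤ → A) (w : List A) : ℤ :=
  ((extB x w).ncard : ℤ) - (extL x w).ncard - (extR x w).ncard + 1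

/-- The extension graph `𝓔_x(w)`: bipartite graph on the disjoint union of
`E⁻_x(w)` and `E⁺_x(w)`, with an edge between left vertex `a` and right vertex `b`
iff `(a, b) ∈ E_x(w)`. -/
def extGraph (x : ℤ → A) (w : List A) :
    SimpleGraph ({a : A // a ∈ extL x w} ⊕ {b : A // b ∈ extR x w}) :=
  SimpleGraph.fromRel fun u v =>
    ∃ (a : {a : A // a ∈ extL x w}) (b : {b : A // b ∈ extR x w}),
      u = Sum.inl a ∧ v = Sum.inr b ∧ (a.1, b.1) ∈ extB x w

/-- The factor complexity `p_x(n)`. -/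
noncomputable def cplx (x : ℤ → A) (n : ℕ) : ℕ :=
  Set.ncard {w : List A | IsFactor x w ∧ w.length = n}

namespace EvAux
open scoped Classical

section GraphGen
open SimpleGraph Finset

variable {V : Type*} [Fintype V]

lemma connected_card_le {G : SimpleGraph V} (h : G.Connected) :
    Fintype.card V ≤ Nat.card G.edgeSet + 1 := by
  classical
  obtain ⟨r⟩ := h.nonempty
  have key : ∀ v : V, v ≠ r → ∃ a, G.Adj v a ∧ G.dist a r < G.dist v r := by
    intro v hv
    obtain ⟨p, hp⟩ := h.exists_walk_length_eq_dist v r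
    cases p with
    | nil => exact absurd rfl hv
    | @cons _ c _ hadj q =>
        refine ⟨c, hadj, ?_⟩
        have h1 : G.dist c r ≤ q.length := SimpleGraph.dist_le q
        rw [SimpleGraph.Walk.length_cons] at hp
        omega
  choose f hf1 hf2 using key
  have hinj : Function.Injective
      (fun v : {v : V // v ≠ r} => (⟨s(v.1, f v.1 v.2), (hf1 v.1 v.2)⟩ : G.edgeSet)) := by
    rintro ⟨v, hv⟩ ⟨w, hw⟩ hvw
    simp only [Subtype.ext_iff, Sym2.eq_iff] at hvw
    rcases hvw with ⟨h1, _⟩ | ⟨h1, h2⟩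
    · exact Subtype.ext h1
    · exfalso
      have d1 := hf2 v hv; have d2 := hf2 w hw
      rw [h2] at d1; rw [← h1] at d2; omega
  have hcard : Nat.card {v : V // v ≠ r} ≤ Nat.card G.edgeSet :=
    Nat.card_le_card_of_injective _ hinj
  have h1 : Nat.card {v : V // v ≠ r} = Fintype.card V - 1 := by
    rw [Nat.card_eq_fintype_card, Fintype.card_subtype_compl, Fintype.card_subtype_eq]
  have : 0 < Fintype.card V := Fintype.card_pos_iff.mpr ⟨r⟩
  omega

omit [Fintype V] in
lemma reachable_of_sup_edge {H : SimpleGraph V} {u v : V} (hr : H.Reachable u v) {a b : V}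
    (h : (H ⊔ SimpleGraph.edge u v).Reachable a b) : H.Reachable a b := by
  obtain ⟨p⟩ := h
  induction p with
  | nil => exact Reachable.refl _
  | @cons c d e hadj q ih =>
      refine Reachable.trans ?_ ih
      rcases (SimpleGraph.sup_adj _ _ _ _).mp hadj with h1 | h1
      · exact h1.reachable
      · rcases (SimpleGraph.edge_adj _ _ _ _).mp h1 with ⟨(⟨rfl, rfl⟩ | ⟨rfl, rfl⟩), _⟩
        · exact hr
        · exact hr.symm

lemma tree_card_edges {G : SimpleGraph V} (h : G.IsTree) :
    Nat.card G.edgeSet + 1 = Fintype.card V := by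
  classical
  have := h.card_edgeFinset
  rwa [SimpleGraph.edgeFinset, Set.toFinset_card, ← Nat.card_eq_fintype_card] at this

lemma isTree_of_connected_of_card {G : SimpleGraph V} (h : G.Connected)
    (hcard : Nat.card G.edgeSet + 1 ≤ Fintype.card V) : G.IsTree := by
  classical
  refine ⟨h, ?_⟩
  intro z c hc
  obtain ⟨a, b, hadj, he⟩ : ∃ a b, G.Adj a b ∧ s(a, b) ∈ c.edges := by
    cases c with
    | nil => exact absurd rfl hc.ne_nil
    | @cons _ d _ hadj q => exact ⟨z, d, hadj, by simp⟩
  have hreach : (G \ SimpleGraph.fromEdgeSet {s(a, b)}).Reachable a b :=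
    (SimpleGraph.adj_and_reachable_delete_edges_iff_exists_cycle.mpr ⟨z, c, hc, he⟩).2
  set H := G \ SimpleGraph.fromEdgeSet {s(a, b)} with hH
  have hle : G ≤ H ⊔ SimpleGraph.edge a b := by
    intro p q hpq
    by_cases hx : (SimpleGraph.fromEdgeSet {s(a, b)} : SimpleGraph V).Adj p q
    · right
      rw [SimpleGraph.fromEdgeSet_adj] at hx
      rw [SimpleGraph.edge_adj]
      obtain ⟨hx1, hx2⟩ := hx
      simp only [Set.mem_singleton_iff, Sym2.eq_iff] at hx1
      tauto
    · left; exact ⟨hpq, hx⟩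
  have hNE : Nonempty V := h.nonempty
  have hconn : H.Connected :=
    SimpleGraph.Connected.mk (fun p q => reachable_of_sup_edge hreach (((h p q)).mono hle))
  have hcount := connected_card_le hconn
  have hES : H.edgeSet = G.edgeSet \ {s(a, b)} := by
    rw [hH, SimpleGraph.edgeSet_sdiff, SimpleGraph.edgeSet_fromEdgeSet]
    ext e
    simp only [Set.mem_diff, Set.mem_singleton_iff, Set.mem_setOf_eq]
    constructor
    · rintro ⟨h1, h2⟩
      refine ⟨h1, fun hcon => h2 ⟨hcon, ?_⟩⟩
      rw [hcon]; simpa using hadj.ne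
    · rintro ⟨h1, h2⟩
      exact ⟨h1, fun hcon => h2 hcon.1⟩
  have hcd : Nat.card H.edgeSet = Nat.card G.edgeSet - 1 := by
    rw [Nat.card_coe_set_eq, Nat.card_coe_set_eq, hES,
      Set.ncard_diff_singleton_of_mem (G.mem_edgeSet.mpr hadj)]
  have hpos : 0 < Nat.card G.edgeSet := by
    rw [Nat.card_coe_set_eq]
    exact (Set.ncard_pos (Set.toFinite _)).mpr ⟨s(a,b), G.mem_edgeSet.mpr hadj⟩
  omega

lemma acyclic_card_le {G : SimpleGraph V} [Nonempty V] (hG : G.IsAcyclic) :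
    Nat.card G.edgeSet + 1 ≤ Fintype.card V := by
  classical
  have hfin : Finite (SimpleGraph V) :=
    Finite.of_injective SimpleGraph.edgeSet SimpleGraph.edgeSet_injective
  obtain ⟨H, ⟨hGH, hHa⟩, hmax⟩ :=
    Set.Finite.exists_maximalFor id {H : SimpleGraph V | G ≤ H ∧ H.IsAcyclic}
      (Set.toFinite _) ⟨G, le_refl G, hG⟩
  have hconn : H.Connected := by
    by_contra hnc
    have hnp : ¬ H.Preconnected := fun hp => hnc (SimpleGraph.Connected.mk hp)
    rw [SimpleGraph.Preconnected] at hnp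
    push_neg at hnp
    obtain ⟨u, v, hnr⟩ := hnp
    have hne : u ≠ v := by rintro rfl; exact hnr (Reachable.refl _)
    have hHadj : ¬ H.Adj u v := fun h => hnr h.reachable
    set H' := H ⊔ SimpleGraph.edge u v with hH'
    have hH'a : H'.IsAcyclic := by
      intro z c hc
      by_cases he : s(u, v) ∈ c.edges
      · have hr := (SimpleGraph.adj_and_reachable_delete_edges_iff_exists_cycle.mpr
          ⟨z, c, hc, he⟩).2
        refine hnr (hr.mono ?_)
        intro p q hpq
        obtain ⟨hpq1, hpq2⟩ := hpq
        rcases (SimpleGraph.sup_adj _ _ _ _).mp hpq1 with h1 | h1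
        · exact h1
        · exfalso
          apply hpq2
          rw [SimpleGraph.edge_adj] at h1
          rw [SimpleGraph.fromEdgeSet_adj]
          constructor
          · simp only [Set.mem_singleton_iff, Sym2.eq_iff]; tauto
          · exact h1.2
      · have hsub : ∀ e ∈ c.edges, e ∈ H.edgeSet := by
          intro e hec
          have h1 : e ∈ H'.edgeSet := c.edges_subset_edgeSet hec
          rw [hH', SimpleGraph.edgeSet_sup] at h1
          rcases h1 with h1 | h1
          · exact h1
          · exfalso
            rw [SimpleGraph.edge_edgeSet_of_ne hne] at h1
            rw [Set.mem_singleton_iff] at h1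
            exact he (h1 ▸ hec)
        exact hHa (c.transfer H hsub) (hc.transfer hsub)
    have hmeq : id H = id H' := le_antisymm le_sup_left (hmax ⟨hGH.trans le_sup_left, hH'a⟩ le_sup_left)
    apply hHadj
    rw [id_eq, id_eq] at hmeq
    rw [hmeq, hH', SimpleGraph.sup_adj, SimpleGraph.edge_adj]
    right; exact ⟨Or.inl ⟨rfl, rfl⟩, hne⟩
  have hcard := tree_card_edges ⟨hconn, hHa⟩
  have hmono : Nat.card G.edgeSet ≤ Nat.card H.edgeSet := by
    rw [Nat.card_coe_set_eq, Nat.card_coe_set_eq]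
    exact Set.ncard_le_ncard (SimpleGraph.edgeSet_mono hGH) (Set.toFinite _)
  omega


end GraphGen


lemma isFactor_iff {x : ℤ → A} {w : List A} :
    IsFactor x w ↔ ∃ i : ℤ, ∀ j, (hj : j < w.length) → x (i + j) = w[j] := by
  constructor
  · rintro ⟨i, hi⟩; exact ⟨i, fun j hj => hi ⟨j, hj⟩⟩
  · rintro ⟨i, hi⟩; exact ⟨i, fun j => hi j.1 j.2⟩

lemma isFactor_prefix {x : ℤ → A} {u v : List A} (h : IsFactor x (u ++ v)) : IsFactor x u := by
  rw [isFactor_iff] at h ⊢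
  obtain ⟨i, hi⟩ := h
  refine ⟨i, fun j hj => ?_⟩
  rw [hi j (by simp; omega), List.getElem_append_left hj]

lemma isFactor_suffix {x : ℤ → A} {u v : List A} (h : IsFactor x (u ++ v)) : IsFactor x v := by
  rw [isFactor_iff] at h ⊢
  obtain ⟨i, hi⟩ := h
  refine ⟨i + u.length, fun j hj => ?_⟩
  have h2 : u.length + j < (u ++ v).length := by simp; omega
  have h3 := hi (u.length + j) h2
  rw [List.getElem_append_right (by omega)] at h3
  simp only [Nat.add_sub_cancel_left] at h3
  rw [← h3]
  congr 1
  push_cast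
  ring

lemma isFactor_extendL {x : ℤ → A} {w : List A} (h : IsFactor x w) :
    ∃ a, IsFactor x (a :: w) := by
  rw [isFactor_iff] at h
  obtain ⟨i, hi⟩ := h
  refine ⟨x (i - 1), ?_⟩
  rw [isFactor_iff]
  refine ⟨i - 1, fun j hj => ?_⟩
  cases j with
  | zero => simp
  | succ k =>
      have hk : k < w.length := by simpa using hj
      have := hi k hk
      rw [List.getElem_cons_succ, ← this]
      congr 1
      push_cast
      ring

lemma isFactor_extendR {x : ℤ → A} {w : List A} (h : IsFactor x w) :
    ∃ b, IsFactor x (w ++ [b]) := by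
  rw [isFactor_iff] at h
  obtain ⟨i, hi⟩ := h
  refine ⟨x (i + w.length), ?_⟩
  rw [isFactor_iff]
  refine ⟨i, fun j hj => ?_⟩
  rcases Nat.lt_or_ge j w.length with hlt | hge
  · rw [List.getElem_append_left hlt]
    exact hi j hlt
  · have hj' : j = w.length := by simp at hj; omega
    subst hj'
    simp [List.getElem_concat_length]

lemma mem_extL {x : ℤ → A} {w : List A} {a : A} : a ∈ extL x w ↔ IsFactor x (a :: w) := Iff.rfl
lemma mem_extR {x : ℤ → A} {w : List A} {b : A} : b ∈ extR x w ↔ IsFactor x (w ++ [b]) := Iff.rfl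
lemma mem_extB {x : ℤ → A} {w : List A} {p : A × A} :
    p ∈ extB x w ↔ IsFactor x (p.1 :: (w ++ [p.2])) := Iff.rfl

lemma extB_fst {x : ℤ → A} {w : List A} {p : A × A} (h : p ∈ extB x w) : p.1 ∈ extL x w := by
  rw [mem_extB] at h
  have : IsFactor x ((p.1 :: w) ++ [p.2]) := by simpa using h
  exact isFactor_prefix this

lemma extB_snd {x : ℤ → A} {w : List A} {p : A × A} (h : p ∈ extB x w) : p.2 ∈ extR x w := by
  rw [mem_extB] at h
  exact isFactor_suffix (u := [p.1]) h

lemma extL_factor {x : ℤ → A} {w : List A} {a : A} (h : a ∈ extL x w) : IsFactor x w :=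
  isFactor_suffix (u := [a]) h

lemma extR_factor {x : ℤ → A} {w : List A} {b : A} (h : b ∈ extR x w) : IsFactor x w :=
  isFactor_prefix h

lemma extL_nonempty {x : ℤ → A} {w : List A} (h : IsFactor x w) : (extL x w).Nonempty :=
  isFactor_extendL h

lemma extR_nonempty {x : ℤ → A} {w : List A} (h : IsFactor x w) : (extR x w).Nonempty :=
  isFactor_extendR h

lemma extB_of_extL {x : ℤ → A} {w : List A} {a : A} (h : a ∈ extL x w) :
    ∃ b, (a, b) ∈ extB x w := by
  obtain ⟨b, hb⟩ := isFactor_extendR (mem_extL.mp h)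
  exact ⟨b, by rwa [mem_extB]; ⟩

lemma extB_of_extR {x : ℤ → A} {w : List A} {b : A} (h : b ∈ extR x w) :
    ∃ a, (a, b) ∈ extB x w := by
  obtain ⟨a, ha⟩ := isFactor_extendL (mem_extR.mp h)
  exact ⟨a, ha⟩

lemma extL_append_subset {x : ℤ → A} {w : List A} {b : A} :
    extL x (w ++ [b]) ⊆ extL x w := by
  intro a ha
  rw [mem_extL] at ha ⊢
  exact isFactor_prefix (u := a :: w) (v := [b]) (by simpa using ha)

lemma exists_factor_len (x : ℤ → A) (n : ℕ) : ∃ w : List A, IsFactor x w ∧ w.length = n := by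
  refine ⟨List.ofFn (fun j : Fin n => x ((0:ℤ) + j)), ⟨0, fun j => ?_⟩, by simp⟩
  have hj : (j : ℕ) < n := by simpa using j.2
  simp [List.get_ofFn]


section Counting
variable [Fintype A]

noncomputable def factF (x : ℤ → A) (n : ℕ) : Finset (List A) :=
  (((List.finite_length_eq A n).subset (fun w hw => hw.2)) :
    ({w : List A | IsFactor x w ∧ w.length = n}).Finite).toFinset

noncomputable def extLF (x : ℤ → A) (w : List A) : Finset A := (extL x w).toFinite.toFinset
noncomputable def extRF (x : ℤ → A) (w : List A) : Finset A := (extR x w).toFinite.toFinset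
noncomputable def extBF (x : ℤ → A) (w : List A) : Finset (A × A) := (extB x w).toFinite.toFinset

variable {x : ℤ → A}

lemma mem_factF {n : ℕ} {w : List A} : w ∈ factF x n ↔ IsFactor x w ∧ w.length = n := by
  simp [factF]

lemma mem_extLF {w : List A} {a : A} : a ∈ extLF x w ↔ a ∈ extL x w :=
  Set.Finite.mem_toFinset _
lemma mem_extRF {w : List A} {b : A} : b ∈ extRF x w ↔ b ∈ extR x w :=
  Set.Finite.mem_toFinset _
lemma mem_extBF {w : List A} {p : A × A} : p ∈ extBF x w ↔ p ∈ extB x w :=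
  Set.Finite.mem_toFinset _

lemma extLF_card {w : List A} : (extLF x w).card = (extL x w).ncard :=
  (Set.ncard_eq_toFinset_card _ _).symm
lemma extRF_card {w : List A} : (extRF x w).card = (extR x w).ncard :=
  (Set.ncard_eq_toFinset_card _ _).symm
lemma extBF_card {w : List A} : (extBF x w).card = (extB x w).ncard :=
  (Set.ncard_eq_toFinset_card _ _).symm

lemma cplx_eq_card (n : ℕ) : cplx x n = (factF x n).card :=
  Set.ncard_eq_toFinset_card _ _

lemma extLF_card_pos {w : List A} (h : IsFactor x w) : 1 ≤ (extLF x w).card := by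
  rw [Finset.one_le_card]
  obtain ⟨a, ha⟩ := extL_nonempty h
  exact ⟨a, mem_extLF.mpr ha⟩

lemma extRF_card_pos {w : List A} (h : IsFactor x w) : 1 ≤ (extRF x w).card := by
  rw [Finset.one_le_card]
  obtain ⟨b, hb⟩ := extR_nonempty h
  exact ⟨b, mem_extRF.mpr hb⟩

/-- Decomposition of length-(n+1) factors by their length-n suffix. -/
lemma factF_succ_left (n : ℕ) :
    factF x (n + 1) = (factF x n).biUnion
      (fun w => (extLF x w).image (fun a => a :: w)) := by
  ext u
  simp only [Finset.mem_biUnion, Finset.mem_image, mem_factF, mem_extLF]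
  constructor
  · rintro ⟨hu, hlen⟩
    cases u with
    | nil => simp at hlen
    | cons a w =>
        refine ⟨w, ⟨isFactor_suffix (u := [a]) hu, by simpa using hlen⟩, a, hu, rfl⟩
  · rintro ⟨w, ⟨hw, hlen⟩, a, ha, rfl⟩
    exact ⟨ha, by simpa using hlen⟩

lemma cplx_succ_left (n : ℕ) :
    cplx x (n + 1) = ∑ w ∈ factF x n, (extLF x w).card := by
  rw [cplx_eq_card, factF_succ_left]
  rw [Finset.card_biUnion]
  · refine Finset.sum_congr rfl (fun w hw => ?_)
    exact Finset.card_image_of_injective _ (fun a b hab => by simpa using hab)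
  · intro w hw w' hw' hne
    simp only [Finset.disjoint_left, Finset.mem_image]
    rintro u ⟨a, ha, rfl⟩ ⟨a', ha', heq⟩
    exact hne (by simpa using (List.cons.injEq .. ▸ heq : _ ∧ _).2.symm ▸ rfl)

/-- Decomposition of length-(n+1) factors by their length-n prefix. -/
lemma factF_succ_right (n : ℕ) :
    factF x (n + 1) = (factF x n).biUnion
      (fun w => (extRF x w).image (fun b => w ++ [b])) := by
  ext u
  simp only [Finset.mem_biUnion, Finset.mem_image, mem_factF, mem_extRF]
  constructor
  · rintro ⟨hu, hlen⟩
    have hne : u ≠ [] := by intro h; rw [h] at hlen; simp at hlen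
    refine ⟨u.dropLast, ⟨?_, by simp [hlen]⟩, u.getLast hne, ?_, ?_⟩
    · exact isFactor_prefix (v := [u.getLast hne]) (by rwa [List.dropLast_append_getLast hne])
    · rw [mem_extR, List.dropLast_append_getLast hne]; exact hu
    · exact List.dropLast_append_getLast hne
  · rintro ⟨w, ⟨hw, hlen⟩, b, hb, rfl⟩
    exact ⟨hb, by simp [hlen]⟩

lemma cplx_succ_right (n : ℕ) :
    cplx x (n + 1) = ∑ w ∈ factF x n, (extRF x w).card := by
  rw [cplx_eq_card, factF_succ_right]
  rw [Finset.card_biUnion]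
  · refine Finset.sum_congr rfl (fun w hw => ?_)
    refine Finset.card_image_of_injective _ (fun a b hab => ?_)
    simpa using hab
  · intro w hw w' hw' hne
    simp only [Finset.disjoint_left, Finset.mem_image]
    rintro u ⟨b, hb, rfl⟩ ⟨b', hb', heq⟩
    have hlen : w.length = w'.length := by
      have := (mem_factF.mp hw).2; have := (mem_factF.mp hw').2; omega
    exact hne ((List.append_inj_left heq.symm hlen) ▸ rfl)

/-- Decomposition of length-(n+2) factors by their middle part. -/
lemma factF_succ_succ (n : ℕ) :
    factF x (n + 2) = (factF x n).biUnion
      (fun w => (extBF x w).image (fun p => p.1 :: (w ++ [p.2]))) := by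
  ext u
  simp only [Finset.mem_biUnion, Finset.mem_image, mem_factF, mem_extBF]
  constructor
  · rintro ⟨hu, hlen⟩
    cases u with
    | nil => simp at hlen
    | cons a t =>
        have ht : IsFactor x t := isFactor_suffix (u := [a]) hu
        have htlen : t.length = n + 1 := by simpa using hlen
        have htne : t ≠ [] := by intro h; rw [h] at htlen; simp at htlen
        refine ⟨t.dropLast, ⟨?_, by simp [htlen]⟩, (a, t.getLast htne), ?_, ?_⟩
        · exact isFactor_prefix (v := [t.getLast htne]) (by rwa [List.dropLast_append_getLast htne])
        · rw [mem_extB]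
          simpa [List.dropLast_append_getLast htne] using hu
        · simp [List.dropLast_append_getLast htne]
  · rintro ⟨w, ⟨hw, hlen⟩, p, hp, rfl⟩
    exact ⟨hp, by simp [hlen]⟩

lemma cplx_succ_succ (n : ℕ) :
    cplx x (n + 2) = ∑ w ∈ factF x n, (extBF x w).card := by
  rw [cplx_eq_card, factF_succ_succ]
  rw [Finset.card_biUnion]
  · refine Finset.sum_congr rfl (fun w hw => ?_)
    refine Finset.card_image_of_injective _ (fun p q hpq => ?_)
    simp only [List.cons.injEq] at hpq
    obtain ⟨h1, h2⟩ := hpq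
    have := List.append_inj_right h2 rfl
    simp only [List.cons.injEq, and_true] at this
    exact Prod.ext h1 this
  · intro w hw w' hw' hne
    simp only [Finset.disjoint_left, Finset.mem_image]
    rintro u ⟨p, hp, rfl⟩ ⟨q, hq, heq⟩
    simp only [List.cons.injEq] at heq
    have hlen : w'.length = w.length := by
      have := (mem_factF.mp hw).2; have := (mem_factF.mp hw').2; omega
    exact hne ((List.append_inj_left heq.2 hlen) ▸ rfl)

/-- Per-word: bi-extensions fibered over right extensions. -/
lemma extBF_eq_biUnion (w : List A) :
    extBF x w = (extRF x w).biUnion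
      (fun b => (extLF x (w ++ [b])).image (fun a => (a, b))) := by
  ext p
  simp only [Finset.mem_biUnion, Finset.mem_image, mem_extBF, mem_extRF, mem_extLF]
  constructor
  · intro hp
    exact ⟨p.2, extB_snd hp, p.1, hp, rfl⟩
  · rintro ⟨b, hb, a, ha, rfl⟩
    exact ha

lemma extBF_card_eq_sum (w : List A) :
    (extBF x w).card = ∑ b ∈ extRF x w, (extLF x (w ++ [b])).card := by
  rw [extBF_eq_biUnion]
  rw [Finset.card_biUnion]
  · exact Finset.sum_congr rfl (fun b hb =>
      Finset.card_image_of_injective _ (fun a a' h => by simpa using h))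
  · intro b hb b' hb' hne
    simp only [Finset.disjoint_left, Finset.mem_image]
    rintro p ⟨a, ha, rfl⟩ ⟨a', ha', heq⟩
    have : b = b' := (congrArg Prod.snd heq).symm
    exact hne this

end Counting

section Analysis
variable [Fintype A] {x : ℤ → A}
open Finset

lemma mult_eq (w : List A) :
    mult x w = ((extBF x w).card : ℤ) - (extLF x w).card - (extRF x w).card + 1 := by
  rw [mult, extBF_card, extLF_card, extRF_card]

lemma sum_mult (n : ℕ) :
    ∑ w ∈ factF x n, mult x w
      = (((cplx x (n+2) : ℤ) - cplx x (n+1)) - ((cplx x (n+1) : ℤ) - cplx x n)) := by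
  have hB := cplx_succ_succ (x := x) n
  have hL := cplx_succ_left (x := x) n
  have hR := cplx_succ_right (x := x) n
  have hN : cplx x n = (factF x n).card := cplx_eq_card n
  calc ∑ w ∈ factF x n, mult x w
      = ∑ w ∈ factF x n, (((extBF x w).card : ℤ) - (extLF x w).card - (extRF x w).card + 1) :=
        Finset.sum_congr rfl (fun w _ => mult_eq w)
    _ = (∑ w ∈ factF x n, ((extBF x w).card : ℤ)) - (∑ w ∈ factF x n, ((extLF x w).card : ℤ))
        - (∑ w ∈ factF x n, ((extRF x w).card : ℤ)) + (factF x n).card := by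
        rw [Finset.sum_add_distrib, Finset.sum_sub_distrib, Finset.sum_sub_distrib]
        simp
    _ = _ := by
        rw [← Nat.cast_sum, ← Nat.cast_sum, ← Nat.cast_sum, ← hB, ← hL, ← hR, hN]
        push_cast
        ring

lemma cplx_mono (n : ℕ) : cplx x n ≤ cplx x (n + 1) := by
  rw [cplx_succ_left, cplx_eq_card]
  calc (factF x n).card = ∑ _w ∈ factF x n, 1 := by simp
    _ ≤ _ := Finset.sum_le_sum (fun w hw => extLF_card_pos (mem_factF.mp hw).1)

lemma ev_const_int (f : ℕ → ℤ) (K : ℕ) (hle : ∀ n, K ≤ n → f (n+1) ≤ f n)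
    (h0 : ∀ n, K ≤ n → 0 ≤ f n) : ∃ N, K ≤ N ∧ ∀ n, N ≤ n → f n = f N := by
  classical
  have hanti : ∀ m n, K ≤ m → m ≤ n → f n ≤ f m := by
    intro m n hm hmn
    induction n, hmn using Nat.le_induction with
    | base => exact le_refl _
    | succ n hn ih => exact (hle n (hm.trans hn)).trans ih
  have hex : ∃ v : ℕ, ∃ n, K ≤ n ∧ (f n).toNat = v := ⟨(f K).toNat, K, le_refl K, rfl⟩
  obtain ⟨n₀, hKn₀, hv⟩ := Nat.find_spec hex
  refine ⟨n₀, hKn₀, fun n hn => ?_⟩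
  have h1 : f n ≤ f n₀ := hanti n₀ n hKn₀ hn
  have h2 : Nat.find hex ≤ (f n).toNat := Nat.find_min' hex ⟨n, hKn₀.trans hn, rfl⟩
  rw [← hv] at h2
  have h3 : 0 ≤ f n := h0 n (hKn₀.trans hn)
  have h4 : 0 ≤ f n₀ := h0 n₀ hKn₀
  omega

lemma ev_const_nat (f : ℕ → ℕ) (K B : ℕ) (hle : ∀ n, K ≤ n → f n ≤ f (n+1))
    (hB : ∀ n, K ≤ n → f n ≤ B) : ∃ N, K ≤ N ∧ ∀ n, N ≤ n → f n = f N := by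
  obtain ⟨N, hKN, hc⟩ := ev_const_int (fun n => (B : ℤ) - f n) K
    (fun n hn => by have := hle n hn; omega)
    (fun n hn => by have := hB n hn; omega)
  refine ⟨N, hKN, fun n hn => ?_⟩
  have := hc n hn
  omega

lemma all_one_of_sum_eq {β : Type*} (s : Finset β) (f : β → ℕ) (h1 : ∀ b ∈ s, 1 ≤ f b)
    (h2 : ∑ b ∈ s, f b = s.card) {b : β} (hb : b ∈ s) : f b = 1 := by
  by_contra h
  have h3 : 1 < f b := by have := h1 b hb; omega
  have hlt := Finset.sum_lt_sum (f := fun _ => 1) (g := f) h1 ⟨b, hb, h3⟩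
  simp only [Finset.sum_const, smul_eq_mul, mul_one] at hlt
  omega

theorem neutral_of_weak (K : ℕ) (hK : ∀ w, IsFactor x w → K ≤ w.length → mult x w ≤ 0) :
    ∃ N, K ≤ N ∧ ∀ w, IsFactor x w → N ≤ w.length → mult x w = 0 := by
  set d : ℕ → ℤ := fun n => (cplx x (n+1) : ℤ) - cplx x n with hd
  have hsum : ∀ n, ∑ w ∈ factF x n, mult x w = d (n+1) - d n := by
    intro n; rw [sum_mult n]
  have hd0 : ∀ n, 0 ≤ d n := fun n => by
    have := cplx_mono (x := x) n; simp [hd]; omega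
  have hnonpos : ∀ n, K ≤ n → ∀ w ∈ factF x n, mult x w ≤ 0 := by
    intro n hn w hw
    obtain ⟨hwf, hwl⟩ := mem_factF.mp hw
    exact hK w hwf (by omega)
  have hdle : ∀ n, K ≤ n → d (n+1) ≤ d n := by
    intro n hn
    have := Finset.sum_nonpos (hnonpos n hn)
    rw [hsum n] at this
    omega
  obtain ⟨N, hKN, hconst⟩ := ev_const_int d K hdle (fun n _ => hd0 n)
  refine ⟨N, hKN, fun w hw hlen => ?_⟩
  set n := w.length with hn
  have hzero : ∑ v ∈ factF x n, mult x v = 0 := by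
    rw [hsum n, hconst n hlen, hconst (n+1) (by omega)]
    ring
  have := (Finset.sum_eq_zero_iff_of_nonpos (hnonpos n (hKN.trans hlen))).mp hzero
  exact this w (mem_factF.mpr ⟨hw, rfl⟩)

/-- Left-special factors of length `n`. -/
noncomputable def LSF (x : ℤ → A) (n : ℕ) : Finset (List A) :=
  (factF x n).filter (fun w => 2 ≤ (extLF x w).card)

/-- number of left-special one-letter right extensions -/
noncomputable def cnt (x : ℤ → A) (w : List A) : ℕ :=
  ((extRF x w).filter (fun b => 2 ≤ (extLF x (w ++ [b])).card)).card

lemma sum_extL_over_right {w : List A} (hm : mult x w = 0) :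
    ∑ b ∈ extRF x w, ((extLF x (w ++ [b])).card : ℤ)
      = ((extLF x w).card : ℤ) - 1 + (extRF x w).card := by
  have h1 := extBF_card_eq_sum (x := x) w
  have h2 := mult_eq (x := x) w
  rw [hm] at h2
  have : ((extBF x w).card : ℤ) = ∑ b ∈ extRF x w, ((extLF x (w ++ [b])).card : ℤ) := by
    rw [h1]; push_cast; rfl
  omega

lemma extLF_wb_pos {w : List A} {b : A} (hb : b ∈ extRF x w) :
    1 ≤ (extLF x (w ++ [b])).card :=
  extLF_card_pos (mem_extRF.mp hb)

lemma cnt_eq_zero {w : List A} (hw : IsFactor x w) (hm : mult x w = 0)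
    (hl : (extLF x w).card ≤ 1) : cnt x w = 0 := by
  have hl1 : (extLF x w).card = 1 := le_antisymm hl (extLF_card_pos hw)
  have hsum := sum_extL_over_right (x := x) (w := w) hm
  rw [hl1] at hsum
  -- each term ≥ 1, r terms, sum = r ⇒ each term = 1
  have hsum' : ∑ b ∈ extRF x w, (extLF x (w ++ [b])).card = (extRF x w).card := by
    have : ((∑ b ∈ extRF x w, (extLF x (w ++ [b])).card : ℕ) : ℤ) = ((extRF x w).card : ℤ) := by
      push_cast
      rw [hsum]; ring
    exact_mod_cast this
  rw [cnt, Finset.card_eq_zero, Finset.filter_eq_empty_iff]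
  intro b hb
  have := all_one_of_sum_eq (extRF x w) _ (fun b hb => extLF_wb_pos hb) hsum' hb
  omega

lemma cnt_pos {w : List A} (hm : mult x w = 0)
    (hl : 2 ≤ (extLF x w).card) : 1 ≤ cnt x w := by
  rw [cnt, Finset.one_le_card, Finset.filter_nonempty_iff]
  by_contra hcon
  push_neg at hcon
  have hall : ∀ b ∈ extRF x w, ((extLF x (w ++ [b])).card : ℤ) = 1 := by
    intro b hb
    have h1 := extLF_wb_pos (x := x) hb
    have h2 := hcon b hb
    omega
  have hsum := sum_extL_over_right (x := x) (w := w) hm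
  rw [Finset.sum_congr rfl hall] at hsum
  simp at hsum
  omega

lemma LSF_succ (n : ℕ) :
    LSF x (n + 1) = (factF x n).biUnion
      (fun w => ((extRF x w).filter (fun b => 2 ≤ (extLF x (w ++ [b])).card)).image
        (fun b => w ++ [b])) := by
  ext u
  constructor
  · intro hu
    rw [LSF, Finset.mem_filter] at hu
    obtain ⟨hu1, hls⟩ := hu
    rw [factF_succ_right, Finset.mem_biUnion] at hu1
    obtain ⟨w, hw, hu2⟩ := hu1
    rw [Finset.mem_image] at hu2
    obtain ⟨b, hb, rfl⟩ := hu2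
    rw [Finset.mem_biUnion]
    exact ⟨w, hw, Finset.mem_image.mpr ⟨b, Finset.mem_filter.mpr ⟨hb, hls⟩, rfl⟩⟩
  · intro hu
    rw [Finset.mem_biUnion] at hu
    obtain ⟨w, hw, hu2⟩ := hu
    rw [Finset.mem_image] at hu2
    obtain ⟨b, hb, rfl⟩ := hu2
    rw [Finset.mem_filter] at hb
    rw [LSF, Finset.mem_filter]
    refine ⟨?_, hb.2⟩
    rw [factF_succ_right, Finset.mem_biUnion]
    exact ⟨w, hw, Finset.mem_image.mpr ⟨b, hb.1, rfl⟩⟩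

lemma LSF_card_succ (n : ℕ) :
    (LSF x (n + 1)).card = ∑ w ∈ factF x n, cnt x w := by
  rw [LSF_succ]
  rw [Finset.card_biUnion]
  · exact Finset.sum_congr rfl (fun w hw =>
      Finset.card_image_of_injective _ (fun b b' h => by simpa using h))
  · intro w hw w' hw' hne
    simp only [Finset.disjoint_left, Finset.mem_image]
    rintro u ⟨b, hb, rfl⟩ ⟨b', hb', heq⟩
    have hlen : w.length = w'.length := by
      have := (mem_factF.mp hw).2; have := (mem_factF.mp hw').2; omega
    exact hne ((List.append_inj_left heq.symm hlen) ▸ rfl)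

lemma LSF_card_le {n : ℕ} {B : ℤ} (hd : ((cplx x (n+1) : ℤ) - cplx x n) ≤ B) :
    ((LSF x n).card : ℤ) ≤ B := by
  have h1 : ((LSF x n).card : ℤ) ≤ ∑ w ∈ factF x n, (((extLF x w).card : ℤ) - 1) := by
    have hss : LSF x n ⊆ factF x n := Finset.filter_subset _ _
    calc ((LSF x n).card : ℤ) = ∑ _w ∈ LSF x n, 1 := by simp
      _ ≤ ∑ w ∈ LSF x n, (((extLF x w).card : ℤ) - 1) := by
          refine Finset.sum_le_sum (fun w hw => ?_)
          have := (Finset.mem_filter.mp hw).2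
          omega
      _ ≤ ∑ w ∈ factF x n, (((extLF x w).card : ℤ) - 1) := by
          refine Finset.sum_le_sum_of_subset_of_nonneg hss (fun w hw _ => ?_)
          have := extLF_card_pos (x := x) (mem_factF.mp hw).1
          omega
  have h2 : ∑ w ∈ factF x n, (((extLF x w).card : ℤ) - 1)
      = (cplx x (n+1) : ℤ) - cplx x n := by
    rw [Finset.sum_sub_distrib]
    simp only [Finset.sum_const, smul_eq_mul, mul_one]
    rw [cplx_succ_left (x := x) n, cplx_eq_card (x := x) n]
    push_cast
    ring
  omega

end Analysis


section Stab
variable [Fintype A] {x : ℤ → A}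
open Finset

theorem stab (N₀ : ℕ) (hneu : ∀ w, IsFactor x w → N₀ ≤ w.length → mult x w = 0) :
    ∃ N₁, N₀ ≤ N₁ ∧ ∀ w, IsFactor x w → N₁ ≤ w.length → 2 ≤ (extLF x w).card →
      ∃ b ∈ extR x w, extLF x (w ++ [b]) = extLF x w := by
  have hneu' : ∀ n, N₀ ≤ n → ∀ w ∈ factF x n, mult x w = 0 := by
    intro n hn w hw
    obtain ⟨h1, h2⟩ := mem_factF.mp hw
    exact hneu w h1 (by omega)
  have hdstep : ∀ n, N₀ ≤ n →
      (cplx x (n+2) : ℤ) - cplx x (n+1) = (cplx x (n+1) : ℤ) - cplx x n := by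
    intro n hn
    have h0 : ∑ w ∈ factF x n, mult x w = 0 :=
      Finset.sum_eq_zero (hneu' n hn)
    have h1 := sum_mult (x := x) n
    rw [h0] at h1
    omega
  have hdconst : ∀ n, N₀ ≤ n →
      (cplx x (n+1) : ℤ) - cplx x n = (cplx x (N₀+1) : ℤ) - cplx x N₀ := by
    intro n hn
    induction n, hn using Nat.le_induction with
    | base => rfl
    | succ n hn ih =>
        have := hdstep n hn
        simp only [show n + 1 + 1 = n + 2 from rfl]
        omega
  have hsumcnt : ∀ n, N₀ ≤ n → ∑ w ∈ LSF x n, cnt x w = (LSF x (n+1)).card := by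
    intro n hn
    have h1 : ∑ w ∈ LSF x n, cnt x w = ∑ w ∈ factF x n, cnt x w := by
      rw [LSF]
      refine Finset.sum_subset (Finset.filter_subset _ _) ?_
      intro w hw hnw
      have h2 : ¬ 2 ≤ (extLF x w).card := fun hcon =>
        hnw (Finset.mem_filter.mpr ⟨hw, hcon⟩)
      exact cnt_eq_zero (mem_factF.mp hw).1 (hneu' n hn w hw) (by omega)
    rw [h1, ← LSF_card_succ]
  have hmono : ∀ n, N₀ ≤ n → (LSF x n).card ≤ (LSF x (n+1)).card := by
    intro n hn
    rw [← hsumcnt n hn]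
    calc (LSF x n).card = ∑ _w ∈ LSF x n, 1 := by simp
      _ ≤ ∑ w ∈ LSF x n, cnt x w := by
          refine Finset.sum_le_sum (fun w hw => ?_)
          rw [LSF, Finset.mem_filter] at hw
          exact cnt_pos (hneu' n hn w hw.1) hw.2
  have hB : ∀ n, N₀ ≤ n →
      (LSF x n).card ≤ ((cplx x (N₀+1) : ℤ) - cplx x N₀).toNat := by
    intro n hn
    have h1 : ((LSF x n).card : ℤ) ≤ (cplx x (N₀+1) : ℤ) - cplx x N₀ := by
      rw [← hdconst n hn]
      exact LSF_card_le (le_refl _)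
    omega
  obtain ⟨N₁, hN₀N₁, hconst⟩ := ev_const_nat (fun n => (LSF x n).card) N₀
    ((cplx x (N₀+1) : ℤ) - cplx x N₀).toNat hmono hB
  refine ⟨N₁, hN₀N₁, fun w hw hlen hls => ?_⟩
  have hnN₀ : N₀ ≤ w.length := hN₀N₁.trans hlen
  have hwmem : w ∈ LSF x w.length := by
    rw [LSF, Finset.mem_filter]
    exact ⟨mem_factF.mpr ⟨hw, rfl⟩, hls⟩
  have hsum_eq : ∑ w' ∈ LSF x w.length, cnt x w' = (LSF x w.length).card := by
    rw [hsumcnt w.length hnN₀]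
    rw [hconst (w.length + 1) (by omega), hconst w.length hlen]
  have hcnt1 : cnt x w = 1 := by
    refine all_one_of_sum_eq (LSF x w.length) _ (fun w' hw' => ?_) hsum_eq hwmem
    rw [LSF, Finset.mem_filter] at hw'
    exact cnt_pos (hneu' w.length hnN₀ w' hw'.1) hw'.2
  rw [cnt, Finset.card_eq_one] at hcnt1
  obtain ⟨b, hb⟩ := hcnt1
  have hbmem : b ∈ (extRF x w).filter (fun c => 2 ≤ (extLF x (w ++ [c])).card) := by
    rw [hb]; exact Finset.mem_singleton_self b
  rw [Finset.mem_filter] at hbmem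
  obtain ⟨hbR, hbls⟩ := hbmem
  have hm := hneu w hw (by omega)
  have hsum := sum_extL_over_right (x := x) (w := w) hm
  have hsplit : ((extLF x (w ++ [b])).card : ℤ)
      + ∑ b' ∈ (extRF x w).erase b, ((extLF x (w ++ [b'])).card : ℤ)
      = ∑ b' ∈ extRF x w, ((extLF x (w ++ [b'])).card : ℤ) :=
    Finset.add_sum_erase _ (fun b' => ((extLF x (w ++ [b'])).card : ℤ)) hbR
  have herase : ∀ b' ∈ (extRF x w).erase b, ((extLF x (w ++ [b'])).card : ℤ) = 1 := by
    intro b' hb'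
    obtain ⟨hne, hbR'⟩ := Finset.mem_erase.mp hb'
    have hnotin : b' ∉ (extRF x w).filter (fun c => 2 ≤ (extLF x (w ++ [c])).card) := by
      rw [hb, Finset.mem_singleton]; exact hne
    have h2 : ¬ 2 ≤ (extLF x (w ++ [b'])).card := fun hcon =>
      hnotin (Finset.mem_filter.mpr ⟨hbR', hcon⟩)
    have hpos := extLF_wb_pos (x := x) hbR'
    omega
  rw [Finset.sum_congr rfl herase] at hsplit
  rw [Finset.sum_const, Finset.card_erase_of_mem hbR] at hsplit
  have hrpos : 1 ≤ (extRF x w).card := extRF_card_pos hw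
  have hcard_eq : (extLF x (w ++ [b])).card = (extLF x w).card := by
    rw [hsum] at hsplit
    simp only [nsmul_eq_mul, mul_one] at hsplit
    have hc : (((extRF x w).card - 1 : ℕ) : ℤ) = ((extRF x w).card : ℤ) - 1 := by
      push_cast [hrpos]
      ring
    omega
  refine ⟨b, mem_extRF.mp hbR, ?_⟩
  refine Finset.eq_of_subset_of_card_le ?_ (le_of_eq hcard_eq.symm)
  intro a ha
  rw [mem_extLF] at ha ⊢
  exact extL_append_subset ha

end Stab

section Graph
variable [Fintype A] {x : ℤ → A}

lemma adj_inl_inr {w : List A} {a : {a : A // a ∈ extL x w}} {b : {b : A // b ∈ extR x w}} :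
    (extGraph x w).Adj (Sum.inl a) (Sum.inr b) ↔ (a.1, b.1) ∈ extB x w := by
  rw [extGraph, SimpleGraph.fromRel_adj]
  constructor
  · rintro ⟨hne, h | h⟩
    · obtain ⟨a', b', h1, h2, h3⟩ := h
      rw [Sum.inl.injEq] at h1
      rw [Sum.inr.injEq] at h2
      subst h1; subst h2
      exact h3
    · obtain ⟨a', b', h1, h2, h3⟩ := h
      exact absurd h2 (by simp)
  · intro h
    exact ⟨by simp, Or.inl ⟨a, b, rfl, rfl, h⟩⟩

lemma ncard_vertex (w : List A) :
    Nat.card ({a : A // a ∈ extL x w} ⊕ {b : A // b ∈ extR x w})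
      = (extL x w).ncard + (extR x w).ncard := by
  rw [Nat.card_sum]
  rfl

lemma ncard_edgeSet (w : List A) :
    Nat.card (extGraph x w).edgeSet = (extB x w).ncard := by
  rw [← Nat.card_coe_set_eq]
  refine (Nat.card_eq_of_bijective
    (fun p : (extB x w) =>
      (⟨s(Sum.inl ⟨p.1.1, extB_fst p.2⟩, Sum.inr ⟨p.1.2, extB_snd p.2⟩),
        by rw [SimpleGraph.mem_edgeSet, adj_inl_inr]; exact p.2⟩ : (extGraph x w).edgeSet))
    ⟨?_, ?_⟩).symm
  · rintro ⟨p, hp⟩ ⟨q, hq⟩ heq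
    simp only [Subtype.mk.injEq, Sym2.eq_iff, Sum.inl.injEq, Sum.inr.injEq,
      Subtype.mk.injEq] at heq
    rcases heq with ⟨h1, h2⟩ | ⟨h1, h2⟩
    · exact Subtype.ext (Prod.ext h1 h2)
    · exact absurd h1 (by simp)
  · rintro ⟨e, he⟩
    revert he
    refine Sym2.ind (fun u v => ?_) e
    intro he
    rw [SimpleGraph.mem_edgeSet, extGraph, SimpleGraph.fromRel_adj] at he
    obtain ⟨hne, h | h⟩ := he
    · obtain ⟨a, b, rfl, rfl, h3⟩ := h
      exact ⟨⟨(a.1, b.1), h3⟩, rfl⟩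
    · obtain ⟨a, b, rfl, rfl, h3⟩ := h
      refine ⟨⟨(a.1, b.1), h3⟩, ?_⟩
      apply Subtype.ext
      exact Sym2.eq_swap

lemma tree_mult {w : List A} (ht : (extGraph x w).IsTree) : mult x w = 0 := by
  haveI : Fintype ({a : A // a ∈ extL x w} ⊕ {b : A // b ∈ extR x w}) := Fintype.ofFinite _
  have h := tree_card_edges ht
  rw [← Nat.card_eq_fintype_card, ncard_edgeSet, ncard_vertex] at h
  rw [mult]
  omega

lemma acyclic_mult {w : List A} (hw : IsFactor x w) (ha : (extGraph x w).IsAcyclic) :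
    mult x w ≤ 0 := by
  haveI : Fintype ({a : A // a ∈ extL x w} ⊕ {b : A // b ∈ extR x w}) := Fintype.ofFinite _
  obtain ⟨a₀, ha₀⟩ := extL_nonempty hw
  haveI : Nonempty ({a : A // a ∈ extL x w} ⊕ {b : A // b ∈ extR x w}) :=
    ⟨Sum.inl ⟨a₀, ha₀⟩⟩
  have h := acyclic_card_le ha
  rw [← Nat.card_eq_fintype_card, ncard_edgeSet, ncard_vertex] at h
  rw [mult]
  omega

lemma tree_of_connected_mult {w : List A} (hc : (extGraph x w).Connected)
    (hm : mult x w = 0) : (extGraph x w).IsTree := by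
  haveI : Fintype ({a : A // a ∈ extL x w} ⊕ {b : A // b ∈ extR x w}) := Fintype.ofFinite _
  refine isTree_of_connected_of_card hc ?_
  rw [← Nat.card_eq_fintype_card, ncard_edgeSet, ncard_vertex]
  rw [mult] at hm
  omega

end Graph


section Main
variable [Fintype A] {x : ℤ → A}
open SimpleGraph

theorem connected_ext {w : List A} (hw : IsFactor x w)
    (hstab : 2 ≤ (extLF x w).card →
      ∃ b ∈ extR x w, extLF x (w ++ [b]) = extLF x w) :
    (extGraph x w).Connected := by
  obtain ⟨a₀, ha₀⟩ := extL_nonempty hw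
  by_cases hls : 2 ≤ (extLF x w).card
  · obtain ⟨b, hbR, heq⟩ := hstab hls
    set hub : {a : A // a ∈ extL x w} ⊕ {b : A // b ∈ extR x w} :=
      Sum.inr (⟨b, hbR⟩ : {b : A // b ∈ extR x w}) with hhub
    have hleft : ∀ a : {a : A // a ∈ extL x w}, (extGraph x w).Adj (Sum.inl a) hub := by
      intro a
      rw [hhub, adj_inl_inr]
      have h1 : a.1 ∈ extLF x (w ++ [b]) := by
        rw [heq, mem_extLF]; exact a.2
      rw [mem_extLF] at h1
      exact h1
    have hreach : ∀ v, (extGraph x w).Reachable v hub := by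
      intro v
      cases v with
      | inl a => exact (hleft a).reachable
      | inr c =>
          obtain ⟨a', ha'⟩ := extB_of_extR c.2
          have hadj : (extGraph x w).Adj (Sum.inl ⟨a', extB_fst ha'⟩) (Sum.inr c) := by
            rw [adj_inl_inr]; exact ha'
          exact (hadj.symm.reachable).trans ((hleft _).reachable)
    haveI : Nonempty ({a : A // a ∈ extL x w} ⊕ {b : A // b ∈ extR x w}) := ⟨hub⟩
    exact SimpleGraph.Connected.mk (fun u v => (hreach u).trans (hreach v).symm)
  · have hcard : (extLF x w).card = 1 := by
      have := extLF_card_pos (x := x) hw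
      omega
    have huniq : ∀ a ∈ extL x w, a = a₀ := by
      intro a ha
      exact Finset.card_le_one.mp (le_of_eq hcard) _ (mem_extLF.mpr ha) _ (mem_extLF.mpr ha₀)
    set hub : {a : A // a ∈ extL x w} ⊕ {b : A // b ∈ extR x w} :=
      Sum.inl (⟨a₀, ha₀⟩ : {a : A // a ∈ extL x w}) with hhub
    have hreach : ∀ v, (extGraph x w).Reachable v hub := by
      intro v
      cases v with
      | inl a =>
          have h1 : a = ⟨a₀, ha₀⟩ := Subtype.ext (huniq a.1 a.2)
          rw [hhub, h1]
      | inr c =>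
          obtain ⟨a', ha'⟩ := extB_of_extR c.2
          have hadj : (extGraph x w).Adj (Sum.inl ⟨a', extB_fst ha'⟩) (Sum.inr c) := by
            rw [adj_inl_inr]; exact ha'
          have h1 : (⟨a', extB_fst ha'⟩ : {a : A // a ∈ extL x w}) = ⟨a₀, ha₀⟩ :=
            Subtype.ext (huniq _ (extB_fst ha'))
          rw [h1] at hadj
          exact hadj.symm.reachable
    haveI : Nonempty ({a : A // a ∈ extL x w} ⊕ {b : A // b ∈ extR x w}) := ⟨hub⟩
    exact SimpleGraph.Connected.mk (fun u v => (hreach u).trans (hreach v).symm)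

theorem ev_tree (K : ℕ) (hK : ∀ w, IsFactor x w → K ≤ w.length → mult x w ≤ 0) :
    ∃ N, ∀ w, IsFactor x w → N ≤ w.length → (extGraph x w).IsTree := by
  obtain ⟨N₀, hKN₀, hneu⟩ := neutral_of_weak K hK
  obtain ⟨N₁, hN₀N₁, hstab⟩ := stab N₀ hneu
  refine ⟨N₁, fun w hw hlen => ?_⟩
  exact tree_of_connected_mult
    (connected_ext hw (fun hls => hstab w hw hlen hls))
    (hneu w hw (by omega))

end Main

end EvAux

/-- `x` is eventually `P` with threshold `N`: `N` is the minimal integer such that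
every factor of `x` of length at least `N` satisfies `P`. -/
def EvThreshold (x : ℤ → A) (P : List A → Prop) (N : ℕ) : Prop :=
  (∀ w, IsFactor x w → N ≤ w.length → P w) ∧
    ∀ M : ℕ, (∀ w, IsFactor x w → M ≤ w.length → P w) → N ≤ M

theorem stmt2 [Fintype A] (h2 : 2 ≤ Fintype.card A)
    (x : ℤ → A) (hx : Function.Surjective x) :
    ((∃ N, EvThreshold x (fun w => (extGraph x w).IsTree) N) ↔
      (∃ M, EvThreshold x (fun w => (extGraph x w).IsAcyclic) M)) ∧
    ((∃ N, EvThreshold x (fun w => (extGraph x w).IsTree) N) ↔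
      (∃ M', EvThreshold x (fun w => mult x w = 0) M')) ∧
    ((∃ N, EvThreshold x (fun w => (extGraph x w).IsTree) N) ↔
      (∃ K, EvThreshold x (fun w => mult x w ≤ 0) K)) ∧
    (∀ N M M' K : ℕ,
      EvThreshold x (fun w => (extGraph x w).IsTree) N →
      EvThreshold x (fun w => (extGraph x w).IsAcyclic) M →
      EvThreshold x (fun w => mult x w = 0) M' →
      EvThreshold x (fun w => mult x w ≤ 0) K →
      K ≤ M ∧ M ≤ N ∧ K ≤ M' ∧ M' ≤ N) := by
  classical
  have hmin : ∀ P : List A → Prop, (∃ n, ∀ w, IsFactor x w → n ≤ w.length → P w) →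
      ∃ N, EvThreshold x P N := by
    intro P h
    exact ⟨Nat.find h, Nat.find_spec h, fun M hM => Nat.find_min' h hM⟩
  have core : ∀ K : ℕ, (∀ w, IsFactor x w → K ≤ w.length → mult x w ≤ 0) →
      ∃ N, EvThreshold x (fun w => (extGraph x w).IsTree) N := by
    intro K hK
    obtain ⟨N, hN⟩ := EvAux.ev_tree K hK
    exact hmin _ ⟨N, hN⟩
  refine ⟨⟨?_, ?_⟩, ⟨?_, ?_⟩, ⟨?_, ?_⟩, ?_⟩
  · rintro ⟨N, hN⟩
    exact hmin _ ⟨N, fun w hw hl => (hN.1 w hw hl).IsAcyclic⟩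
  · rintro ⟨M, hM⟩
    exact core M (fun w hw hl => EvAux.acyclic_mult hw (hM.1 w hw hl))
  · rintro ⟨N, hN⟩
    exact hmin _ ⟨N, fun w hw hl => EvAux.tree_mult (hN.1 w hw hl)⟩
  · rintro ⟨M', hM'⟩
    exact core M' (fun w hw hl => le_of_eq (hM'.1 w hw hl))
  · rintro ⟨N, hN⟩
    exact hmin _ ⟨N, fun w hw hl => le_of_eq (EvAux.tree_mult (hN.1 w hw hl))⟩
  · rintro ⟨K, hKt⟩
    exact core K hKt.1
  · intro N M M' K hN hM hM' hK
    refine ⟨?_, ?_, ?_, ?_⟩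
    · exact hK.2 M (fun w hw hl => EvAux.acyclic_mult hw (hM.1 w hw hl))
    · exact hM.2 N (fun w hw hl => (hN.1 w hw hl).IsAcyclic)
    · exact hK.2 M' (fun w hw hl => le_of_eq (hM'.1 w hw hl))
    · exact hM'.2 N (fun w hw hl => EvAux.tree_mult (hN.1 w hw hl))
end

section
/- Let x be a bi-infinite word over a finite alphabet A that is eventually strong or neutral (resp. eventually weak or neutral) with threshold N. For any x-maximal suffix code W whose elements all have length at least K and at most M, where K ≥ N, one has s_x(K) ≤ ∑_{w ∈ W} (Card E⁺_x(w) − 1) ≤ s_x(M) (resp. s_x(K) ≥ ∑_{w ∈ W} (Card E⁺_x(w) − 1) ≥ s_x(M)). -/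
open List

variable {A : Type*} {B : Type*} {C : Type*}

/-- The first difference of complexity `s_x(n) = p_x(n+1) - p_x(n)`. -/
noncomputable def sdx (x : ℤ → A) (n : ℕ) : ℤ := (cplx x (n + 1) : ℤ) - cplx x n

set_option linter.unusedSectionVars false

section Aux

-- ### infrastructure

def win (x : ℤ → A) (i : ℤ) (n : ℕ) : List A := List.ofFn fun j : Fin n => x (i + j)

@[simp] lemma win_length (x : ℤ → A) (i : ℤ) (n : ℕ) : (win x i n).length = n := by
  simp [win]

lemma isFactor_iff {x : ℤ → A} {w : List A} : IsFactor x w ↔ ∃ i, win x i w.length = w := by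
  constructor
  · rintro ⟨i, h⟩
    refine ⟨i, List.ext_get (by simp) ?_⟩
    intro j h1 h2
    simpa [win] using h ⟨j, h2⟩
  · rintro ⟨i, h⟩
    refine ⟨i, fun j => ?_⟩
    rw [List.get_of_eq h.symm]
    simp [win]

lemma isFactor_win (x : ℤ → A) (i : ℤ) (n : ℕ) : IsFactor x (win x i n) := by
  rw [isFactor_iff]
  exact ⟨i, by simp⟩

lemma win_append (x : ℤ → A) (i : ℤ) (m n : ℕ) :
    win x i (m + n) = win x i m ++ win x (i + m) n := by
  refine List.ext_getElem (by simp) ?_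
  intro j h1 h2
  simp only [win, List.getElem_ofFn, List.getElem_append, List.length_ofFn]
  split
  · rfl
  · congr 1
    have : m ≤ j := by simpa using ‹¬ j < m›
    push_cast [Nat.cast_sub this]
    ring

lemma IsFactor.of_suffix {x : ℤ → A} {u w : List A} (hs : u <:+ w) (h : IsFactor x w) :
    IsFactor x u := by
  obtain ⟨t, rfl⟩ := hs
  rw [isFactor_iff] at h
  obtain ⟨i, h⟩ := h
  rw [List.length_append] at h
  rw [win_append] at h
  obtain ⟨-, h2⟩ := List.append_inj h (by simp)
  exact isFactor_iff.2 ⟨i + t.length, h2⟩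

lemma IsFactor.of_prefix {x : ℤ → A} {u w : List A} (hs : u <+: w) (h : IsFactor x w) :
    IsFactor x u := by
  obtain ⟨t, rfl⟩ := hs
  rw [isFactor_iff] at h
  obtain ⟨i, h⟩ := h
  rw [List.length_append] at h
  rw [win_append] at h
  obtain ⟨h1, -⟩ := List.append_inj h (by simp)
  exact isFactor_iff.2 ⟨i, h1⟩

lemma extR_nonempty {x : ℤ → A} {w : List A} (h : IsFactor x w) : (extR x w).Nonempty := by
  rw [isFactor_iff] at h
  obtain ⟨i, h⟩ := h
  refine ⟨x (i + w.length), ?_⟩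
  have : win x i (w.length + 1) = w ++ [x (i + w.length)] := by
    rw [win_append, h]
    congr 1
    simp [win, List.ofFn_succ]
  have h2 := isFactor_win x i (w.length + 1)
  rw [this] at h2
  exact h2

lemma extL_nonempty {x : ℤ → A} {w : List A} (h : IsFactor x w) : (extL x w).Nonempty := by
  rw [isFactor_iff] at h
  obtain ⟨i, h⟩ := h
  refine ⟨x (i - 1), ?_⟩
  have : win x (i - 1) (1 + w.length) = x (i - 1) :: w := by
    rw [win_append]
    have e1 : win x (i-1) 1 = [x (i - 1)] := by simp [win, List.ofFn_succ]
    have e2 : i - 1 + (1 : ℕ) = i := by push_cast; ring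
    rw [e1, e2, h]
    rfl
  have h2 := isFactor_win x (i - 1) (1 + w.length)
  rw [this] at h2
  exact h2

lemma finite_factors (x : ℤ → A) [Fintype A] (n : ℕ) :
    {w : List A | IsFactor x w ∧ w.length = n}.Finite := by
  apply Set.Finite.subset (Set.finite_range (fun f : Fin n → A => List.ofFn f))
  rintro w ⟨-, rfl⟩
  exact ⟨w.get, List.ofFn_get w⟩

-- ### Finsets and counting

variable [Fintype A]

noncomputable def Fn (x : ℤ → A) (n : ℕ) : Finset (List A) := (finite_factors x n).toFinset

lemma mem_Fn {x : ℤ → A} {n : ℕ} {w : List A} :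
    w ∈ Fn x n ↔ IsFactor x w ∧ w.length = n := by
  simp [Fn]

lemma cplx_eq (x : ℤ → A) (n : ℕ) : cplx x n = (Fn x n).card :=
  Set.ncard_eq_toFinset_card _ _

noncomputable def eR (x : ℤ → A) (w : List A) : Finset A := (Set.toFinite (extR x w)).toFinset
noncomputable def eL (x : ℤ → A) (w : List A) : Finset A := (Set.toFinite (extL x w)).toFinset
noncomputable def eB (x : ℤ → A) (w : List A) : Finset (A × A) := (Set.toFinite (extB x w)).toFinset

lemma mem_eR {x : ℤ → A} {w : List A} {b : A} : b ∈ eR x w ↔ IsFactor x (w ++ [b]) := by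
  simp [eR, extR]

lemma mem_eL {x : ℤ → A} {w : List A} {a : A} : a ∈ eL x w ↔ IsFactor x (a :: w) := by
  simp [eL, extL]

lemma mem_eB {x : ℤ → A} {w : List A} {p : A × A} :
    p ∈ eB x w ↔ IsFactor x (p.1 :: (w ++ [p.2])) := by
  simp [eB, extB]

lemma ncard_eR (x : ℤ → A) (w : List A) : (extR x w).ncard = (eR x w).card :=
  Set.ncard_eq_toFinset_card _ _

lemma ncard_eL (x : ℤ → A) (w : List A) : (extL x w).ncard = (eL x w).card :=
  Set.ncard_eq_toFinset_card _ _

lemma ncard_eB (x : ℤ → A) (w : List A) : (extB x w).ncard = (eB x w).card :=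
  Set.ncard_eq_toFinset_card _ _

lemma cplx_succ (x : ℤ → A) (n : ℕ) :
    cplx x (n + 1) = ∑ w ∈ Fn x n, (eR x w).card := by
  classical
  rw [cplx_eq]
  rw [Finset.card_eq_sum_card_fiberwise (f := fun u => u.dropLast) (t := Fn x n) ?_]
  · refine Finset.sum_congr rfl fun w hw => ?_
    rw [mem_Fn] at hw
    refine (Finset.card_bij (fun b _ => w ++ [b]) ?_ ?_ ?_).symm
    · intro b hb
      rw [mem_eR] at hb
      simp only [Finset.mem_filter, mem_Fn]
      refine ⟨⟨hb, by simp [hw.2]⟩, ?_⟩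
      simp
    · intro b₁ h₁ b₂ h₂ h
      simpa using h
    · intro u hu
      simp only [Finset.mem_filter, mem_Fn] at hu
      have hne : u ≠ [] := by
        intro h; rw [h] at hu; simp at hu
      refine ⟨u.getLast hne, ?_, ?_⟩
      · rw [mem_eR, ← hu.2, List.dropLast_append_getLast hne]
        exact hu.1.1
      · show w ++ [u.getLast hne] = u
        rw [← hu.2]
        exact List.dropLast_append_getLast hne
  · intro u hu
    simp only [Finset.mem_coe, mem_Fn] at hu ⊢
    constructor
    · exact hu.1.of_prefix (List.dropLast_prefix u)
    · simp [List.length_dropLast, hu.2]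

lemma eB_card (x : ℤ → A) (w : List A) :
    (eB x w).card = ∑ a ∈ eL x w, (eR x (a :: w)).card := by
  classical
  rw [Finset.card_eq_sum_card_fiberwise (f := fun p => p.1) (t := eL x w) ?_]
  · refine Finset.sum_congr rfl fun a ha => ?_
    refine (Finset.card_bij (fun b _ => (a, b)) ?_ ?_ ?_).symm
    · intro b hb
      rw [mem_eR] at hb
      simp only [Finset.mem_filter, mem_eB]
      exact ⟨by simpa using hb, by simp⟩
    · intro b₁ h₁ b₂ h₂ h
      simpa using h
    · rintro ⟨a', b⟩ hp
      simp only [Finset.mem_filter, mem_eB] at hp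
      obtain ⟨h1, rfl⟩ := hp
      exact ⟨b, by rw [mem_eR]; simpa using h1, rfl⟩
  · intro p hp
    rw [Finset.mem_coe, mem_eB] at hp
    simp only [Finset.mem_coe, mem_eL]
    exact hp.of_prefix ⟨[p.2], by simp⟩

lemma sdx_eq (x : ℤ → A) (n : ℕ) :
    sdx x n = ∑ w ∈ Fn x n, (((extR x w).ncard : ℤ) - 1) := by
  rw [sdx, cplx_succ, cplx_eq]
  rw [Finset.sum_sub_distrib]
  push_cast
  simp [ncard_eR]

lemma mult_eq (x : ℤ → A) (w : List A) :
    mult x w = (∑ a ∈ eL x w, ((eR x (a :: w)).card : ℤ))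
      - (eL x w).card - (eR x w).card + 1 := by
  rw [mult, ncard_eB, ncard_eL, ncard_eR, eB_card]
  push_cast
  ring

-- ### main combinatorial part

lemma isFactor_nil (x : ℤ → A) : IsFactor x ([] : List A) :=
  ⟨0, fun j => j.elim0⟩

lemma exists_cons_suffix {w u : List A} (h : w <:+ u) (hne : w ≠ u) :
    ∃ c, c :: w <:+ u := by
  obtain ⟨t, rfl⟩ := h
  rcases List.eq_nil_or_concat t with rfl | ⟨L, c, rfl⟩
  · simp at hne
  · exact ⟨c, L, by simp⟩

noncomputable def SS (x : ℤ → A) (W : Finset (List A)) : ℤ :=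
  ∑ w ∈ W, (((extR x w).ncard : ℤ) - 1)

def Good (x : ℤ → A) (K M : ℕ) (W : Finset (List A)) : Prop :=
  (∀ w ∈ W, IsFactor x w) ∧
  (∀ u ∈ W, ∀ v ∈ W, u ≠ v → ¬ u <:+ v ∧ ¬ v <:+ u) ∧
  (∀ u, IsFactor x u → ∃ w ∈ W, u <:+ w ∨ w <:+ u) ∧
  (∀ w ∈ W, K ≤ w.length ∧ w.length ≤ M)

lemma good_eq_Fn {x : ℤ → A} {K M : ℕ} {W : Finset (List A)} (hG : Good x K M W)
    (n : ℕ) (hconst : ∀ w ∈ W, w.length = n) : W = Fn x n := by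
  ext t
  constructor
  · intro ht
    exact mem_Fn.2 ⟨hG.1 t ht, hconst t ht⟩
  · intro ht
    rw [mem_Fn] at ht
    obtain ⟨v, hv, hcomp⟩ := hG.2.2.1 t ht.1
    have : t = v := by
      rcases hcomp with h | h
      · exact h.eq_of_length (by rw [ht.2, hconst v hv])
      · exact (h.eq_of_length (by rw [hconst v hv, ht.2])).symm
    exact this ▸ hv

noncomputable def muG [Fintype A] (M : ℕ) (W : Finset (List A)) : ℕ :=
  ∑ w ∈ W, (Fintype.card A + 1) ^ (M - w.length)

noncomputable def nuG (K : ℕ) (W : Finset (List A)) : ℕ :=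
  ∑ w ∈ W, (w.length - K)

section Steps

lemma cons_injective (w : List A) : Function.Injective (fun a => a :: w) := by
  intro a b h
  injection h

lemma step_grow {x : ℤ → A} {K M : ℕ} {W : Finset (List A)} (hG : Good x K M W)
    {w : List A} (hw : w ∈ W) (hlt : w.length < M) :
    ∃ W', Good x K M W' ∧ muG M W' < muG M W ∧ SS x W' = SS x W + mult x w := by
  classical
  obtain ⟨hfac, hcode, hmax, hlen⟩ := hG
  have hwfac : IsFactor x w := hfac w hw
  set D : Finset (List A) := (eL x w).image (fun a => a :: w) with hD
  have hmemD : ∀ v, v ∈ D ↔ ∃ a, a ∈ eL x w ∧ a :: w = v := by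
    intro v; simp [hD]
  have hDnotW : ∀ v ∈ D, v ∉ W := by
    intro v hv hvW
    obtain ⟨a, ha, rfl⟩ := (hmemD v).1 hv
    have hne : w ≠ a :: w := by
      intro h; have := congrArg List.length h; simp at this
    exact (hcode w hw (a :: w) hvW hne).1 (List.suffix_cons a w)
  have hdisj : Disjoint (W.erase w) D := by
    rw [Finset.disjoint_right]
    intro v hv hvW
    exact hDnotW v hv (Finset.mem_of_mem_erase hvW)
  refine ⟨W.erase w ∪ D, ?_, ?_, ?_⟩
  · -- Goodness
    have hmem' : ∀ v, v ∈ W.erase w ∪ D ↔ (v ∈ W ∧ v ≠ w) ∨ v ∈ D := by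
      intro v
      simp only [Finset.mem_union, Finset.mem_erase]
      tauto
    refine ⟨?_, ?_, ?_, ?_⟩
    · intro v hv
      rcases (hmem' v).1 hv with ⟨hvW, -⟩ | hvD
      · exact hfac v hvW
      · obtain ⟨a, ha, rfl⟩ := (hmemD v).1 hvD
        exact mem_eL.1 ha
    · intro u hu v hv huv
      rcases (hmem' u).1 hu with ⟨huW, hune⟩ | huD
      · rcases (hmem' v).1 hv with ⟨hvW, hvne⟩ | hvD
        · exact hcode u huW v hvW huv
        · obtain ⟨a, ha, rfl⟩ := (hmemD v).1 hvD
          constructor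
          · intro hs
            rcases List.suffix_cons_iff.1 hs with rfl | hs'
            · exact hDnotW _ hvD huW
            · exact (hcode u huW w hw hune).1 hs'
          · intro hs
            have : w <:+ u := (List.suffix_cons a w).trans hs
            have hne : w ≠ u := fun h => hune h.symm
            exact (hcode w hw u huW hne).1 this
      · obtain ⟨a, ha, rfl⟩ := (hmemD u).1 huD
        rcases (hmem' v).1 hv with ⟨hvW, hvne⟩ | hvD
        · constructor
          · intro hs
            have : w <:+ v := (List.suffix_cons a w).trans hs
            have hne : w ≠ v := fun h => hvne h.symm
            exact (hcode w hw v hvW hne).1 this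
          · intro hs
            rcases List.suffix_cons_iff.1 hs with rfl | hs'
            · exact hDnotW _ huD hvW
            · exact (hcode v hvW w hw hvne).1 hs'
        · obtain ⟨b, hb, rfl⟩ := (hmemD v).1 hvD
          constructor
          · intro hs
            exact huv (hs.eq_of_length (by simp))
          · intro hs
            exact huv (hs.eq_of_length (by simp)).symm
    · intro u hu
      obtain ⟨v, hv, hcomp⟩ := hmax u hu
      by_cases hvw : v = w
      · subst hvw
        rcases hcomp with hs | hs
        · obtain ⟨a, ha⟩ := extL_nonempty hwfac
          have haL : a ∈ eL x v := mem_eL.2 ha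
          refine ⟨a :: v, (hmem' _).2 (Or.inr ((hmemD _).2 ⟨a, haL, rfl⟩)), Or.inl ?_⟩
          exact hs.trans (List.suffix_cons a v)
        · by_cases heq : v = u
          · subst heq
            obtain ⟨a, ha⟩ := extL_nonempty hwfac
            have haL : a ∈ eL x v := mem_eL.2 ha
            exact ⟨a :: v, (hmem' _).2 (Or.inr ((hmemD _).2 ⟨a, haL, rfl⟩)),
              Or.inl (List.suffix_cons a v)⟩
          · obtain ⟨c, hc⟩ := exists_cons_suffix hs heq
            have hcfac : IsFactor x (c :: v) := IsFactor.of_suffix hc hu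
            have hcL : c ∈ eL x v := mem_eL.2 hcfac
            exact ⟨c :: v, (hmem' _).2 (Or.inr ((hmemD _).2 ⟨c, hcL, rfl⟩)), Or.inr hc⟩
      · exact ⟨v, (hmem' _).2 (Or.inl ⟨hv, hvw⟩), hcomp⟩
    · intro v hv
      rcases (hmem' v).1 hv with ⟨hvW, -⟩ | hvD
      · exact hlen v hvW
      · obtain ⟨a, ha, rfl⟩ := (hmemD v).1 hvD
        have := (hlen w hw).1
        simp only [List.length_cons]
        omega
  · -- measure
    rw [muG, Finset.sum_union hdisj]
    have hsplit : (∑ v ∈ W.erase w, (Fintype.card A + 1) ^ (M - v.length))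
        + (Fintype.card A + 1) ^ (M - w.length) = muG M W := by
      rw [muG]
      exact Finset.sum_erase_add _ _ hw
    rw [← hsplit]
    have hDsum : ∑ v ∈ D, (Fintype.card A + 1) ^ (M - v.length)
        = (eL x w).card * (Fintype.card A + 1) ^ (M - (w.length + 1)) := by
      rw [hD, Finset.sum_image (fun a _ b _ h => cons_injective w h)]
      simp [Finset.sum_const, mul_comm]
    rw [hDsum]
    have hcard : (eL x w).card ≤ Fintype.card A := Finset.card_le_univ _
    have hk : M - w.length = (M - (w.length + 1)) + 1 := by omega
    have hpos : 0 < (Fintype.card A + 1) ^ (M - (w.length + 1)) := pow_pos (by omega) _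
    have : (eL x w).card * (Fintype.card A + 1) ^ (M - (w.length + 1))
        < (Fintype.card A + 1) ^ (M - w.length) := by
      rw [hk, pow_succ]
      calc (eL x w).card * (Fintype.card A + 1) ^ (M - (w.length + 1))
          = (Fintype.card A + 1) ^ (M - (w.length + 1)) * (eL x w).card := mul_comm _ _
        _ < (Fintype.card A + 1) ^ (M - (w.length + 1)) * (Fintype.card A + 1) :=
            (Nat.mul_lt_mul_left hpos).2 (by omega)
    omega
  · -- SS
    rw [SS, Finset.sum_union hdisj]
    have hsplit : (∑ v ∈ W.erase w, (((extR x v).ncard : ℤ) - 1))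
        + (((extR x w).ncard : ℤ) - 1) = SS x W := by
      rw [SS]
      exact Finset.sum_erase_add _ _ hw
    have hDsum : ∑ v ∈ D, (((extR x v).ncard : ℤ) - 1)
        = ∑ a ∈ eL x w, (((extR x (a :: w)).ncard : ℤ) - 1) := by
      rw [hD, Finset.sum_image (fun a _ b _ h => cons_injective w h)]
    rw [hDsum]
    have hm := mult_eq x w
    have hsum : ∑ a ∈ eL x w, (((extR x (a :: w)).ncard : ℤ) - 1)
        = (∑ a ∈ eL x w, ((eR x (a :: w)).card : ℤ)) - (eL x w).card := by
      rw [Finset.sum_sub_distrib]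
      simp [ncard_eR]
    rw [hsum]
    rw [← ncard_eR x w] at hm
    linarith [hsplit, hm]

lemma step_shrink {x : ℤ → A} {K M : ℕ} {W : Finset (List A)} (hG : Good x K M W)
    {a : A} {u : List A} (hw : a :: u ∈ W) (hKlt : K < (a :: u).length)
    (hmaxlen : ∀ v ∈ W, v.length ≤ (a :: u).length) :
    ∃ W', Good x K M W' ∧ nuG K W' < nuG K W ∧ SS x W' = SS x W - mult x u := by
  classical
  obtain ⟨hfac, hcode, hmax, hlen⟩ := hG
  have hufac : IsFactor x u := IsFactor.of_suffix (List.suffix_cons a u) (hfac _ hw)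
  set D : Finset (List A) := (eL x u).image (fun b => b :: u) with hD
  have hmemD : ∀ v, v ∈ D ↔ ∃ b, b ∈ eL x u ∧ b :: u = v := by
    intro v; simp [hD]
  have haL : a ∈ eL x u := mem_eL.2 (hfac _ hw)
  have haD : a :: u ∈ D := (hmemD _).2 ⟨a, haL, rfl⟩
  have hDW : D ⊆ W := by
    intro v hv
    obtain ⟨b, hb, rfl⟩ := (hmemD v).1 hv
    have hbfac : IsFactor x (b :: u) := mem_eL.1 hb
    obtain ⟨v', hv', hcomp⟩ := hmax (b :: u) hbfac
    rcases hcomp with hs | hs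
    · -- b :: u <:+ v'
      have h1 : v'.length ≤ (a :: u).length := hmaxlen v' hv'
      have h2 : (b :: u).length ≤ v'.length := hs.length_le
      have : b :: u = v' := hs.eq_of_length (by simp at h1 h2 ⊢; omega)
      exact this ▸ hv'
    · rcases List.suffix_cons_iff.1 hs with rfl | hs'
      · exact hv'
      · -- v' <:+ u
        exfalso
        have hvau : v' <:+ a :: u := hs'.trans (List.suffix_cons a u)
        have hne : v' ≠ a :: u := by
          intro h
          have := hs'.length_le
          rw [h] at this
          simp at this
        exact (hcode v' hv' (a :: u) hw hne).1 hvau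
  have huW : u ∉ W := by
    intro huW
    have hne : u ≠ a :: u := by
      intro h; have := congrArg List.length h; simp at this
    exact (hcode u huW (a :: u) hw hne).1 (List.suffix_cons a u)
  have huWD : u ∉ W \ D := fun h => huW (Finset.mem_sdiff.1 h).1
  refine ⟨insert u (W \ D), ?_, ?_, ?_⟩
  · have hmem' : ∀ v, v ∈ insert u (W \ D) ↔ v = u ∨ (v ∈ W ∧ v ∉ D) := by
      intro v
      simp only [Finset.mem_insert, Finset.mem_sdiff]
    have hsub1 : ∀ v' ∈ W, v' ∉ D → ¬ u <:+ v' := by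
      intro v' hv'W hv'D hs
      have hne : u ≠ v' := fun h => huW (h ▸ hv'W)
      obtain ⟨c, hc⟩ := exists_cons_suffix hs hne
      have hcfac : IsFactor x (c :: u) := IsFactor.of_suffix hc (hfac v' hv'W)
      have hcD : c :: u ∈ D := (hmemD _).2 ⟨c, mem_eL.2 hcfac, rfl⟩
      by_cases hcv : c :: u = v'
      · exact hv'D (hcv ▸ hcD)
      · exact (hcode (c :: u) (hDW hcD) v' hv'W hcv).1 hc
    have hsub2 : ∀ v' ∈ W, v' ∉ D → ¬ v' <:+ u := by
      intro v' hv'W hv'D hs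
      have hvau : v' <:+ a :: u := hs.trans (List.suffix_cons a u)
      have hne' : v' ≠ a :: u := fun h => hv'D (h ▸ haD)
      exact (hcode v' hv'W (a :: u) hw hne').1 hvau
    refine ⟨?_, ?_, ?_, ?_⟩
    · intro v hv
      rcases (hmem' v).1 hv with hvu | ⟨hvW, -⟩
      · rw [hvu]; exact hufac
      · exact hfac v hvW
    · intro v hv v' hv' hne
      rcases (hmem' v).1 hv with hvu | ⟨hvW, hvD⟩
      · rcases (hmem' v').1 hv' with hv'u | ⟨hv'W, hv'D⟩
        · exact absurd (hvu.trans hv'u.symm) hne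
        · rw [hvu]
          exact ⟨hsub1 v' hv'W hv'D, hsub2 v' hv'W hv'D⟩
      · rcases (hmem' v').1 hv' with hv'u | ⟨hv'W, hv'D⟩
        · rw [hv'u]
          exact ⟨hsub2 v hvW hvD, hsub1 v hvW hvD⟩
        · exact hcode v hvW v' hv'W hne
    · intro t ht
      obtain ⟨v, hv, hcomp⟩ := hmax t ht
      by_cases hvD : v ∈ D
      · obtain ⟨b, hb, rfl⟩ := (hmemD v).1 hvD
        refine ⟨u, (hmem' u).2 (Or.inl rfl), ?_⟩
        rcases hcomp with hs | hs
        · rcases List.suffix_cons_iff.1 hs with rfl | hs'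
          · exact Or.inr (List.suffix_cons b u)
          · exact Or.inl hs'
        · exact Or.inr ((List.suffix_cons b u).trans hs)
      · exact ⟨v, (hmem' v).2 (Or.inr ⟨hv, hvD⟩), hcomp⟩
    · intro v hv
      rcases (hmem' v).1 hv with hvu | ⟨hvW, -⟩
      · rw [hvu]
        have h2 := (hlen (a :: u) hw).2
        simp only [List.length_cons] at hKlt h2
        omega
      · exact hlen v hvW
  · -- measure
    have hinj : ∀ b ∈ eL x u, ∀ c ∈ eL x u, b :: u = c :: u → b = c :=
      fun b _ c _ h => cons_injective u h
    have hDsum : nuG K D = (eL x u).card * ((a :: u).length - K) := by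
      rw [nuG, hD, Finset.sum_image hinj]
      simp [Finset.sum_const, mul_comm]
    have hsplit : nuG K (W \ D) + nuG K D = nuG K W := by
      rw [nuG, nuG, nuG]
      exact Finset.sum_sdiff hDW
    have hnu' : nuG K (insert u (W \ D)) = (u.length - K) + nuG K (W \ D) := by
      rw [nuG, nuG, Finset.sum_insert huWD]
    have hc1 : 1 ≤ (eL x u).card := Finset.card_pos.2 ⟨a, haL⟩
    have hlu : (a :: u).length = u.length + 1 := by simp
    have hKu : K ≤ u.length := by
      simp only [List.length_cons] at hKlt; omega
    rw [hnu', ← hsplit, hDsum]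
    have : u.length - K < (eL x u).card * (u.length + 1 - K) := by
      calc u.length - K < u.length + 1 - K := by omega
        _ = 1 * (u.length + 1 - K) := (one_mul _).symm
        _ ≤ (eL x u).card * (u.length + 1 - K) := Nat.mul_le_mul_right _ hc1
    rw [hlu]
    omega
  · -- SS
    have hinj : ∀ b ∈ eL x u, ∀ c ∈ eL x u, b :: u = c :: u → b = c :=
      fun b _ c _ h => cons_injective u h
    have hDsum : SS x D = ∑ b ∈ eL x u, (((extR x (b :: u)).ncard : ℤ) - 1) := by
      rw [SS, hD, Finset.sum_image hinj]
    have hsplit : SS x (W \ D) + SS x D = SS x W := by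
      rw [SS, SS, SS]
      exact Finset.sum_sdiff hDW
    have hins : SS x (insert u (W \ D)) = (((extR x u).ncard : ℤ) - 1) + SS x (W \ D) := by
      rw [SS, SS, Finset.sum_insert huWD]
    have hm := mult_eq x u
    have hsum : ∑ b ∈ eL x u, (((extR x (b :: u)).ncard : ℤ) - 1)
        = (∑ b ∈ eL x u, ((eR x (b :: u)).card : ℤ)) - (eL x u).card := by
      rw [Finset.sum_sub_distrib]
      simp [ncard_eR]
    rw [hins, ← hsplit, hDsum, hsum]
    rw [← ncard_eR x u] at hm
    linarith [hm]

end Steps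

-- ### main inductions

lemma main_le {x : ℤ → A} {K M : ℕ} :
    ∀ t (W : Finset (List A)), muG M W ≤ t → Good x K M W →
      ((∀ w, IsFactor x w → K ≤ w.length → 0 ≤ mult x w) → SS x W ≤ SS x (Fn x M)) ∧
      ((∀ w, IsFactor x w → K ≤ w.length → mult x w ≤ 0) → SS x (Fn x M) ≤ SS x W) := by
  intro t
  induction t with
  | zero =>
    intro W hμ hG
    exfalso
    obtain ⟨w, hw, -⟩ := hG.2.2.1 [] (isFactor_nil x)
    have h1 : 0 < (Fintype.card A + 1) ^ (M - w.length) := pow_pos (by omega) _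
    have h2 : (Fintype.card A + 1) ^ (M - w.length) ≤ muG M W := by
      rw [muG]
      exact Finset.single_le_sum (f := fun v => (Fintype.card A + 1) ^ (M - v.length))
        (fun v _ => Nat.zero_le _) hw
    omega
  | succ t ih =>
    intro W hμ hG
    by_cases hex : ∃ w ∈ W, w.length < M
    · obtain ⟨w, hw, hlt⟩ := hex
      obtain ⟨W', hG', hμ', hS⟩ := step_grow hG hw hlt
      have hih := ih W' (by omega) hG'
      have hwfac := hG.1 w hw
      have hwK := (hG.2.2.2 w hw).1
      constructor
      · intro HS
        have h0 := HS w hwfac hwK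
        have h1 := hih.1 HS
        linarith
      · intro HW
        have h0 := HW w hwfac hwK
        have h1 := hih.2 HW
        linarith
    · push_neg at hex
      have : W = Fn x M := by
        refine good_eq_Fn hG M fun w hw => ?_
        exact le_antisymm (hG.2.2.2 w hw).2 (hex w hw)
      rw [this]
      exact ⟨fun _ => le_refl _, fun _ => le_refl _⟩

lemma main_ge {x : ℤ → A} {K M : ℕ} :
    ∀ t (W : Finset (List A)), nuG K W ≤ t → Good x K M W →
      ((∀ w, IsFactor x w → K ≤ w.length → 0 ≤ mult x w) → SS x (Fn x K) ≤ SS x W) ∧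
      ((∀ w, IsFactor x w → K ≤ w.length → mult x w ≤ 0) → SS x W ≤ SS x (Fn x K)) := by
  intro t
  induction t with
  | zero =>
    intro W hν hG
    by_cases hex : ∃ w ∈ W, K < w.length
    · exfalso
      obtain ⟨w, hw, hlt⟩ := hex
      have h2 : w.length - K ≤ nuG K W := by
        rw [nuG]
        exact Finset.single_le_sum (f := fun v => v.length - K) (fun v _ => Nat.zero_le _) hw
      omega
    · push_neg at hex
      have : W = Fn x K := by
        refine good_eq_Fn hG K fun w hw => ?_
        exact le_antisymm (hex w hw) (hG.2.2.2 w hw).1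
      rw [this]
      exact ⟨fun _ => le_refl _, fun _ => le_refl _⟩
  | succ t ih =>
    intro W hν hG
    by_cases hex : ∃ w ∈ W, K < w.length
    · obtain ⟨w0, hw0, hlt0⟩ := hex
      obtain ⟨w, hw, hwmax⟩ := Finset.exists_max_image W (fun v => v.length) ⟨w0, hw0⟩
      have hKw : K < w.length := lt_of_lt_of_le hlt0 (hwmax w0 hw0)
      obtain ⟨a, u, rfl⟩ : ∃ a u, w = a :: u := by
        cases w with
        | nil => simp at hKw
        | cons a u => exact ⟨a, u, rfl⟩
      obtain ⟨W', hG', hν', hS⟩ := step_shrink hG hw hKw hwmax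
      have hih := ih W' (by omega) hG'
      have hufac : IsFactor x u :=
        IsFactor.of_suffix (List.suffix_cons a u) (hG.1 _ hw)
      have huK : K ≤ u.length := by
        simp only [List.length_cons] at hKw; omega
      constructor
      · intro HS
        have h0 := HS u hufac huK
        have h1 := hih.1 HS
        linarith
      · intro HW
        have h0 := HW u hufac huK
        have h1 := hih.2 HW
        linarith
    · push_neg at hex
      have : W = Fn x K := by
        refine good_eq_Fn hG K fun w hw => ?_
        exact le_antisymm (hex w hw) (hG.2.2.2 w hw).1
      rw [this]
      exact ⟨fun _ => le_refl _, fun _ => le_refl _⟩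


end Aux

theorem stmt4 [Fintype A] (h2 : 2 ≤ Fintype.card A)
    (x : ℤ → A) (hx : Function.Surjective x) (N K M : ℕ) (hKN : N ≤ K)
    (W : Finset (List A))
    (hWL : ∀ w ∈ W, IsFactor x w)
    (hcode : ∀ u ∈ W, ∀ v ∈ W, u ≠ v → ¬ u <:+ v ∧ ¬ v <:+ u)
    (hmax : ∀ u, IsFactor x u → ∃ w ∈ W, u <:+ w ∨ w <:+ u)
    (hlen : ∀ w ∈ W, K ≤ w.length ∧ w.length ≤ M) :
    (EvThreshold x (fun w => 0 ≤ mult x w) N →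
      sdx x K ≤ ∑ w ∈ W, (((extR x w).ncard : ℤ) - 1) ∧
        ∑ w ∈ W, (((extR x w).ncard : ℤ) - 1) ≤ sdx x M) ∧
    (EvThreshold x (fun w => mult x w ≤ 0) N →
      sdx x M ≤ ∑ w ∈ W, (((extR x w).ncard : ℤ) - 1) ∧
        ∑ w ∈ W, (((extR x w).ncard : ℤ) - 1) ≤ sdx x K) := by
  have hG : Good x K M W := ⟨hWL, hcode, hmax, hlen⟩
  have hge := main_ge (nuG K W) W le_rfl hG
  have hle := main_le (muG M W) W le_rfl hG
  have hsdK : sdx x K = SS x (Fn x K) := by rw [sdx_eq, SS]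
  have hsdM : sdx x M = SS x (Fn x M) := by rw [sdx_eq, SS]
  have hSW : SS x W = ∑ w ∈ W, (((extR x w).ncard : ℤ) - 1) := rfl
  constructor
  · intro hEv
    have HS : ∀ w, IsFactor x w → K ≤ w.length → 0 ≤ mult x w :=
      fun w hf hl => hEv.1 w hf (le_trans hKN hl)
    exact ⟨by rw [hsdK, ← hSW]; exact hge.1 HS, by rw [hsdM, ← hSW]; exact hle.1 HS⟩
  · intro hEv
    have HW : ∀ w, IsFactor x w → K ≤ w.length → mult x w ≤ 0 :=
      fun w hf hl => hEv.1 w hf (le_trans hKN hl)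
    exact ⟨by rw [hsdM, ← hSW]; exact hle.2 HW, by rw [hsdK, ← hSW]; exact hge.2 HW⟩
end

section
/- Let x be a bi-infinite word over a finite alphabet A that is eventually strong or neutral with threshold N and let σ : A* → B* be a non-erasing morphism. Then there exists C ∈ ℤ such that c_x(n) ≤ C + p_x(n) for all n ≥ max{1, N·‖σ‖}. -/
open List

variable {A : Type*} {B : Type*} {C : Type*}

/-- Application of a morphism (given by its values on letters) to a finite word. -/
def appw (σ : A → List B) (w : List A) : List B := (w.map σ).flatten

/-- `y` is the image of the bi-infinite word `x` under the (non-erasing) morphism `σ`,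
i.e. `y = ⋯σ(x_{-1})σ(x_0)σ(x_1)⋯`, anchored so that `σ(x_0)` starts at position `0`. -/
def IsImage (σ : A → List B) (x : ℤ → A) (y : ℤ → B) : Prop :=
  ∃ t : ℤ → ℤ, t 0 = 0 ∧ (∀ n : ℤ, t (n + 1) = t n + (σ (x n)).length) ∧
    ∀ (n : ℤ) (j : Fin (σ (x n)).length), y (t n + (j : ℕ)) = (σ (x n)).get j

/-- The width `‖σ‖` of a morphism. -/
noncomputable def width [Fintype A] (σ : A → List B) : ℕ :=
  Finset.univ.sup fun a => (σ a).length

/-- `(w, k)` is a covering of the nonempty word `u`: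
`u = σ(w)_{[k+1, k+|u|]}`, `k + 1 ≤ |σ(w₁)|` and `k + |u| > |σ(w₁⋯w_{|w|-1})|`. -/
def IsCovering (σ : A → List B) (u : List B) (w : List A) (k : ℕ) : Prop :=
  w ≠ [] ∧ u ≠ [] ∧ u = ((appw σ w).drop k).take u.length ∧
    k + 1 ≤ (w.head?.elim 0 fun a => (σ a).length) ∧ (appw σ w.dropLast).length < k + u.length

/-- `c_x(n)`: the number of coverings `(w, k)` of words of length `n` with `w ∈ L(x)`. -/
noncomputable def ccount (σ : A → List B) (x : ℤ → A) (n : ℕ) : ℕ :=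
  Set.ncard {p : List A × ℕ |
    IsFactor x p.1 ∧ ∃ u : List B, u.length = n ∧ IsCovering σ u p.1 p.2}

namespace Aux

def fac (x : ℤ → A) (i : ℤ) (n : ℕ) : List A := (List.range n).map fun j : ℕ => x (i + (j : ℤ))

@[simp] lemma fac_length (x : ℤ → A) (i : ℤ) (n : ℕ) : (fac x i n).length = n := by
  simp [fac]

lemma fac_add (x : ℤ → A) (i : ℤ) (m n : ℕ) :
    fac x i (m + n) = fac x i m ++ fac x (i + m) n := by
  simp only [fac, List.range_add, List.map_append, List.map_map]
  congr 1
  apply List.map_congr_left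
  intro j _
  simp only [Function.comp_apply]
  congr 1
  push_cast; ring

lemma isFactor_iff_fac (x : ℤ → A) (w : List A) :
    IsFactor x w ↔ ∃ i : ℤ, w = fac x i w.length := by
  constructor
  · rintro ⟨i, hi⟩
    refine ⟨i, ?_⟩
    apply List.ext_get (by simp)
    intro n h1 h2
    have := hi ⟨n, h1⟩
    simp [fac] at this ⊢
    exact this.symm
  · rintro ⟨i, hw⟩
    refine ⟨i, fun j => ?_⟩
    rw [List.get_of_eq hw]
    simp [fac]

lemma fac_isFactor (x : ℤ → A) (i : ℤ) (n : ℕ) : IsFactor x (fac x i n) := by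
  rw [isFactor_iff_fac]; exact ⟨i, by simp⟩

lemma isFactor_infix {x : ℤ → A} {w u : List A} (h : IsFactor x w) (h2 : u <:+: w) :
    IsFactor x u := by
  obtain ⟨s, t, hw'⟩ := h2
  rw [isFactor_iff_fac] at h
  obtain ⟨i, hw⟩ := h
  rw [← hw'] at hw
  have hl : (s ++ u ++ t).length = s.length + (u.length + t.length) := by
    rw [List.length_append, List.length_append, Nat.add_assoc]
  rw [hl, fac_add, fac_add] at hw
  rw [List.append_assoc] at hw
  have h1 := List.append_inj hw (by simp)
  have h2 := List.append_inj h1.2 (by simp)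
  rw [isFactor_iff_fac]
  exact ⟨i + s.length, h2.1⟩

lemma isFactor_prefix {x : ℤ → A} {w u : List A} (h : IsFactor x w) (h2 : u <+: w) :
    IsFactor x u := isFactor_infix h h2.isInfix

lemma isFactor_suffix {x : ℤ → A} {w u : List A} (h : IsFactor x w) (h2 : u <:+ w) :
    IsFactor x u := isFactor_infix h h2.isInfix

lemma exists_extR {x : ℤ → A} {w : List A} (h : IsFactor x w) :
    ∃ b, IsFactor x (w ++ [b]) := by
  rw [isFactor_iff_fac] at h
  obtain ⟨i, hw⟩ := h
  refine ⟨x (i + (w.length : ℤ)), ?_⟩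
  rw [isFactor_iff_fac]
  refine ⟨i, ?_⟩
  have : (w ++ [x (i + (w.length : ℤ))]).length = w.length + 1 := by simp
  rw [this, fac_add, ← hw]
  simp [fac, List.range_succ]

lemma exists_extL {x : ℤ → A} {w : List A} (h : IsFactor x w) :
    ∃ a, IsFactor x (a :: w) := by
  rw [isFactor_iff_fac] at h
  obtain ⟨i, hw⟩ := h
  refine ⟨x (i - 1), ?_⟩
  rw [isFactor_iff_fac]
  refine ⟨i - 1, ?_⟩
  have : (x (i - 1) :: w).length = 1 + w.length := by simp; ring
  rw [this, fac_add]
  have h1 : fac x (i - 1) 1 = [x (i - 1)] := by simp [fac, List.range_succ]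
  have h2 : (i - 1 : ℤ) + (1 : ℕ) = i := by push_cast; ring
  rw [h1, h2]
  simpa using hw

-- appw lemmas
@[simp] lemma appw_nil (σ : A → List B) : appw σ [] = [] := by simp [appw]

@[simp] lemma appw_cons (σ : A → List B) (a : A) (w : List A) :
    appw σ (a :: w) = σ a ++ appw σ w := by simp [appw]

@[simp] lemma appw_append (σ : A → List B) (u v : List A) :
    appw σ (u ++ v) = appw σ u ++ appw σ v := by simp [appw]

lemma length_le_appw (σ : A → List B) (hne : ∀ a, σ a ≠ []) (w : List A) :
    w.length ≤ (appw σ w).length := by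
  induction w with
  | nil => simp
  | cons a t ih =>
    have := List.length_pos_iff.mpr (hne a)
    simp only [appw_cons, List.length_append, List.length_cons]
    omega

lemma appw_suffix_le (σ : A → List B) {s u : List A} (h : s <:+ u) :
    (appw σ s).length ≤ (appw σ u).length := by
  obtain ⟨t, rfl⟩ := h
  simp

-- ===== Finset layer =====
section FinsetLayer

variable [Fintype A]

lemma factors_finite (x : ℤ → A) (n : ℕ) :
    {w : List A | IsFactor x w ∧ w.length = n}.Finite :=
  (List.finite_length_eq A n).subset fun _ hw => hw.2

noncomputable def LFin (x : ℤ → A) (n : ℕ) : Finset (List A) :=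
  (factors_finite x n).toFinset

@[simp] lemma mem_LFin {x : ℤ → A} {n : ℕ} {w : List A} :
    w ∈ LFin x n ↔ IsFactor x w ∧ w.length = n := by
  simp [LFin, Set.Finite.mem_toFinset]

noncomputable def eRF (x : ℤ → A) (w : List A) : Finset A :=
  (Set.toFinite (extR x w)).toFinset

noncomputable def eLF (x : ℤ → A) (w : List A) : Finset A :=
  (Set.toFinite (extL x w)).toFinset

noncomputable def eBF (x : ℤ → A) (w : List A) : Finset (A × A) :=
  (Set.toFinite (extB x w)).toFinset

@[simp] lemma mem_eRF {x : ℤ → A} {w : List A} {b : A} :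
    b ∈ eRF x w ↔ IsFactor x (w ++ [b]) := by
  simp [eRF, Set.Finite.mem_toFinset, extR]

@[simp] lemma mem_eLF {x : ℤ → A} {w : List A} {a : A} :
    a ∈ eLF x w ↔ IsFactor x (a :: w) := by
  simp [eLF, Set.Finite.mem_toFinset, extL]

@[simp] lemma mem_eBF {x : ℤ → A} {w : List A} {p : A × A} :
    p ∈ eBF x w ↔ IsFactor x (p.1 :: (w ++ [p.2])) := by
  simp [eBF, Set.Finite.mem_toFinset, extB]

lemma ncard_extR (x : ℤ → A) (w : List A) : (extR x w).ncard = (eRF x w).card :=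
  Set.ncard_eq_toFinset_card _ _

lemma ncard_extL (x : ℤ → A) (w : List A) : (extL x w).ncard = (eLF x w).card :=
  Set.ncard_eq_toFinset_card _ _

lemma ncard_extB (x : ℤ → A) (w : List A) : (extB x w).ncard = (eBF x w).card :=
  Set.ncard_eq_toFinset_card _ _

lemma one_le_eRF {x : ℤ → A} {w : List A} (h : IsFactor x w) : 1 ≤ (eRF x w).card := by
  obtain ⟨b, hb⟩ := exists_extR h
  exact Finset.card_pos.mpr ⟨b, mem_eRF.mpr hb⟩

open Classical in
lemma eBF_card_eq (x : ℤ → A) (w : List A) :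
    (eBF x w).card = ∑ a ∈ eLF x w, (eRF x (a :: w)).card := by
  rw [Finset.card_eq_sum_card_fiberwise (f := Prod.fst) (t := eLF x w)]
  · apply Finset.sum_congr rfl
    intro a _
    apply Finset.card_bij (fun p _ => p.2)
    · rintro ⟨a', b⟩ hp
      simp only [Finset.mem_filter, mem_eBF] at hp
      obtain ⟨h1, rfl⟩ := hp
      exact mem_eRF.mpr (by simpa using h1)
    · rintro ⟨a1, b1⟩ hp1 ⟨a2, b2⟩ hp2 h
      simp only [Finset.mem_filter] at hp1 hp2
      simp_all [Prod.ext_iff]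
    · intro b hb
      refine ⟨(a, b), ?_, rfl⟩
      simp only [Finset.mem_filter, mem_eBF, and_true]
      simpa using mem_eRF.mp hb
  · rintro ⟨a, b⟩ hp
    simp only [Finset.mem_coe, mem_eBF] at hp
    apply mem_eLF.mpr
    exact isFactor_prefix hp (by
      simp only []
      exact List.cons_prefix_cons.mpr ⟨rfl, List.prefix_append _ _⟩)

end FinsetLayer

section EXT

variable [Fintype A]

lemma pernode {x : ℤ → A} {w : List A} (hm : 0 ≤ mult x w) :
    ((eRF x w).card : ℤ) - 1 ≤ ∑ a ∈ eLF x w, (((eRF x (a :: w)).card : ℤ) - 1) := by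
  have hsum : ∑ a ∈ eLF x w, (((eRF x (a :: w)).card : ℤ) - 1)
      = ((eBF x w).card : ℤ) - (eLF x w).card := by
    rw [Finset.sum_sub_distrib, Finset.sum_const, nsmul_eq_mul, mul_one]
    rw [eBF_card_eq]
    push_cast
    ring
  rw [hsum]
  unfold mult at hm
  rw [ncard_extR, ncard_extL, ncard_extB] at hm
  linarith

open Classical in
noncomputable def SF (x : ℤ → A) (w : List A) (n : ℕ) : Finset (List A) :=
  Finset.filter (fun u => w <:+ u) (LFin x n)

open Classical in
@[simp] lemma mem_SF {x : ℤ → A} {w u : List A} {n : ℕ} :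
    u ∈ SF x w n ↔ (IsFactor x u ∧ u.length = n) ∧ w <:+ u := by
  simp [SF, Finset.mem_filter]

/-- the letter preceding the occurrence of `w` as a suffix of `u` -/
def gfun (a₀ : A) (w u : List A) : A := (u.drop (u.length - w.length - 1)).headD a₀

lemma gfun_spec {a₀ : A} {w u : List A} (hs : w <:+ u) (hlt : w.length < u.length) :
    (gfun a₀ w u) :: w <:+ u := by
  have hj : u.length - w.length - 1 < u.length := by omega
  have hdrop := List.drop_eq_getElem_cons (l := u) hj
  have hw : w = u.drop (u.length - w.length) := List.suffix_iff_eq_drop.mp hs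
  have hidx : u.length - w.length - 1 + 1 = u.length - w.length := by omega
  rw [hidx, ← hw] at hdrop
  have : gfun a₀ w u = u[u.length - w.length - 1] := by
    rw [gfun, hdrop]; rfl
  rw [this, ← hdrop]
  exact List.drop_suffix _ _

lemma gfun_eq {a₀ a : A} {w u : List A} (hs : (a :: w) <:+ u) (hlt : w.length < u.length) :
    gfun a₀ w u = a := by
  have hw : a :: w = u.drop (u.length - (a :: w).length) := List.suffix_iff_eq_drop.mp hs
  have hidx : u.length - w.length - 1 = u.length - (a :: w).length := by
    simp only [List.length_cons]; omega
  rw [gfun, hidx, ← hw]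
  rfl

open Classical in
lemma SF_partition {x : ℤ → A} {w : List A} {n : ℕ} (a₀ : A) (hlt : w.length < n) (a : A) :
    Finset.filter (fun u => gfun a₀ w u = a) (SF x w n) = SF x (a :: w) n := by
  ext u
  simp only [Finset.mem_filter, mem_SF]
  constructor
  · rintro ⟨⟨⟨hf, hlen⟩, hs⟩, hg⟩
    refine ⟨⟨hf, hlen⟩, ?_⟩
    have := gfun_spec (a₀ := a₀) hs (by omega)
    rwa [hg] at this
  · rintro ⟨⟨hf, hlen⟩, hs⟩
    have hws : w <:+ u := (List.suffix_cons a w).trans hs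
    exact ⟨⟨⟨hf, hlen⟩, hws⟩, gfun_eq hs (by omega)⟩

open Classical in
lemma EXT {x : ℤ → A} (a₀ : A) (N n : ℕ)
    (hmult : ∀ w, IsFactor x w → N ≤ w.length → 0 ≤ mult x w) :
    ∀ d w, IsFactor x w → N ≤ w.length → w.length + d = n →
      ((eRF x w).card : ℤ) - 1 ≤ ∑ u ∈ SF x w n, (((eRF x u).card : ℤ) - 1) := by
  intro d
  induction d with
  | zero =>
    intro w hf hN hlen
    have hSF : SF x w n = {w} := by
      ext u
      simp only [mem_SF, Finset.mem_singleton]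
      constructor
      · rintro ⟨⟨_, hlen'⟩, hs⟩
        exact (hs.eq_of_length (by omega)).symm
      · rintro rfl
        exact ⟨⟨hf, by omega⟩, List.suffix_refl _⟩
    rw [hSF, Finset.sum_singleton]
  | succ d ih =>
    intro w hf hN hlen
    have hstep := pernode (hmult w hf hN)
    have h2 : ∀ a ∈ eLF x w,
        (((eRF x (a :: w)).card : ℤ) - 1) ≤ ∑ u ∈ SF x (a :: w) n, (((eRF x u).card : ℤ) - 1) := by
      intro a ha
      exact ih (a :: w) (mem_eLF.mp ha) (by simp; omega) (by simp; omega)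
    have h3 : ∑ a ∈ eLF x w, (((eRF x (a :: w)).card : ℤ) - 1)
        ≤ ∑ a ∈ eLF x w, ∑ u ∈ SF x (a :: w) n, (((eRF x u).card : ℤ) - 1) :=
      Finset.sum_le_sum h2
    have h4 : ∑ a ∈ eLF x w, ∑ u ∈ SF x (a :: w) n, (((eRF x u).card : ℤ) - 1)
        = ∑ u ∈ SF x w n, (((eRF x u).card : ℤ) - 1) := by
      have hmaps : ∀ u ∈ SF x w n, gfun a₀ w u ∈ eLF x w := by
        intro u hu
        obtain ⟨⟨hfu, hlenu⟩, hs⟩ := mem_SF.mp hu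
        apply mem_eLF.mpr
        exact isFactor_suffix hfu (gfun_spec hs (by omega))
      have := Finset.sum_fiberwise_of_maps_to hmaps (fun u => ((eRF x u).card : ℤ) - 1)
      rw [← this]
      apply Finset.sum_congr rfl
      intro a _
      rw [SF_partition a₀ (by omega)]
    linarith

end EXT

-- ===== trim map and key inequality =====
section Trim

variable [Fintype A]

lemma length_appw_le (σ : A → List B) (w : List A) :
    (appw σ w).length ≤ width σ * w.length := by
  induction w with
  | nil => simp
  | cons a t ih =>
    have h1 : (σ a).length ≤ width σ := by
      unfold width; exact Finset.le_sup (f := fun a => (σ a).length) (Finset.mem_univ a)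
    simp only [appw_cons, List.length_append, List.length_cons]
    calc (σ a).length + (appw σ t).length ≤ width σ + width σ * t.length := by omega
    _ = width σ * (t.length + 1) := by ring

lemma one_le_width (σ : A → List B) (a₀ : A) (hne : ∀ a, σ a ≠ []) : 1 ≤ width σ := by
  have h1 : 1 ≤ (σ a₀).length := List.length_pos_iff.mpr (hne a₀)
  refine h1.trans ?_
  unfold width; exact Finset.le_sup (f := fun a => (σ a).length) (Finset.mem_univ a₀)

lemma WSet_finite (x : ℤ → A) (σ : A → List B) (hne : ∀ a, σ a ≠ []) (n : ℕ) :
    {v : List A | IsFactor x v ∧ v ≠ [] ∧ (appw σ v.tail).length < n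
      ∧ n ≤ (appw σ v).length}.Finite := by
  apply (List.finite_length_le A n).subset
  rintro v ⟨-, hv, h1, -⟩
  have h2 : v.tail.length ≤ (appw σ v.tail).length := length_le_appw σ hne _
  have h3 : v.tail.length = v.length - 1 := by simp
  have h4 : 1 ≤ v.length := List.length_pos_iff.mpr hv
  simp only [Set.mem_setOf_eq]
  omega

noncomputable def WF (x : ℤ → A) (σ : A → List B) (hne : ∀ a, σ a ≠ []) (n : ℕ) :
    Finset (List A) := (WSet_finite x σ hne n).toFinset

@[simp] lemma mem_WF {x : ℤ → A} {σ : A → List B} {hne : ∀ a, σ a ≠ []} {n : ℕ} {v : List A} :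
    v ∈ WF x σ hne n ↔ IsFactor x v ∧ v ≠ [] ∧ (appw σ v.tail).length < n
      ∧ n ≤ (appw σ v).length := by
  simp [WF, Set.Finite.mem_toFinset]

open Classical in
noncomputable def trim (σ : A → List B) (v : List A) (n : ℕ) : List A :=
  v.drop (Nat.findGreatest (fun i => n ≤ (appw σ (v.drop i)).length) n)

lemma trim_suffix (σ : A → List B) (v : List A) (n : ℕ) : trim σ v n <:+ v :=
  List.drop_suffix _ _

open Classical in
lemma trim_mem {x : ℤ → A} {σ : A → List B} (hne : ∀ a, σ a ≠ []) {n : ℕ} (h1 : 1 ≤ n)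
    {v : List A} (hv : v ∈ LFin x n) : trim σ v n ∈ WF x σ hne n := by
  classical
  obtain ⟨hf, hlen⟩ := mem_LFin.mp hv
  set P := fun i => n ≤ (appw σ (v.drop i)).length with hP
  have hP0 : P 0 := by
    simp only [hP, List.drop_zero]
    exact hlen ▸ length_le_appw σ hne v
  set j := Nat.findGreatest P n with hj
  have hjle : j ≤ n := Nat.findGreatest_le n
  have hPj : P j := Nat.findGreatest_spec (Nat.zero_le n) hP0
  have hjlt : j < n := by
    rcases Nat.lt_or_ge j n with h | h
    · exact h
    · exfalso
      have hjn : j = n := le_antisymm hjle h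
      have hnil : v.drop j = [] := by
        rw [hjn, ← hlen]; exact List.drop_length
      have hP' : n ≤ (appw σ (v.drop j)).length := hPj
      rw [hnil] at hP'
      simp at hP'
      omega
  have hnP : ¬ P (j + 1) := Nat.findGreatest_is_greatest (n := n) (k := j + 1) (by omega) (by omega)
  refine mem_WF.mpr ⟨?_, ?_, ?_, ?_⟩
  · exact isFactor_suffix hf (trim_suffix σ v n)
  · intro hnil
    have hdj : v.drop j = trim σ v n := rfl
    have : (v.drop j).length = 0 := by rw [hdj, hnil]; rfl
    rw [List.length_drop, hlen] at this
    omega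
  · have htail : (v.drop j).tail = v.drop (j + 1) := List.tail_drop
    have htrim : trim σ v n = v.drop j := rfl
    rw [htrim, htail]
    exact lt_of_not_ge hnP
  · exact hPj

open Classical in
lemma trim_eq {x : ℤ → A} {σ : A → List B} (hne : ∀ a, σ a ≠ []) {n : ℕ}
    {v w : List A} (hv : v ∈ LFin x n) (hw : w ∈ WF x σ hne n) (hs : w <:+ v) :
    trim σ v n = w := by
  classical
  obtain ⟨hf, hlen⟩ := mem_LFin.mp hv
  obtain ⟨hwf, hwne, hwtail, hwlen⟩ := mem_WF.mp hw
  set P := fun i => n ≤ (appw σ (v.drop i)).length with hP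
  have hwd : w = v.drop (v.length - w.length) := List.suffix_iff_eq_drop.mp hs
  have hwlelen : w.length ≤ v.length := hs.length_le
  set j₀ := v.length - w.length with hj₀
  have hPj₀ : P j₀ := by
    simp only [hP, ← hwd]
    exact hwlen
  have hj₀n : j₀ ≤ n := by omega
  have hge : j₀ ≤ Nat.findGreatest P n := Nat.le_findGreatest hj₀n hPj₀
  have hle : Nat.findGreatest P n ≤ j₀ := by
    by_contra hcon
    push_neg at hcon
    have hPfg : P (Nat.findGreatest P n) := by
      apply Nat.findGreatest_spec (Nat.zero_le n)
      simp only [hP, List.drop_zero]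
      exact hlen ▸ length_le_appw σ hne v
    set j := Nat.findGreatest P n with hj
    have htail : w.tail = v.drop (j₀ + 1) := by
      rw [hwd, List.tail_drop]
    have hsub : v.drop j <:+ w.tail := by
      rw [htail]
      have : v.drop j = (v.drop (j₀ + 1)).drop (j - (j₀ + 1)) := by
        rw [List.drop_drop]
        congr 1
        omega
      rw [this]
      exact List.drop_suffix _ _
    have hlen2 : (appw σ (v.drop j)).length ≤ (appw σ w.tail).length :=
      appw_suffix_le σ hsub
    have : n ≤ (appw σ (v.drop j)).length := hPfg
    omega
  have heq : Nat.findGreatest P n = j₀ := le_antisymm hle hge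
  have htrim : trim σ v n = v.drop (Nat.findGreatest P n) := rfl
  rw [htrim, heq, ← hwd]

open Classical in
lemma key3 {x : ℤ → A} {σ : A → List B} (a₀ : A) (hne : ∀ a, σ a ≠ []) {N n : ℕ}
    (hmult : ∀ w, IsFactor x w → N ≤ w.length → 0 ≤ mult x w)
    (h1 : 1 ≤ n) (hNn : N * width σ ≤ n) :
    ∑ v ∈ WF x σ hne n, (((eRF x v).card : ℤ) - 1)
      ≤ ∑ v ∈ LFin x n, (((eRF x v).card : ℤ) - 1) := by
  classical
  have hwidth : 1 ≤ width σ := one_le_width σ a₀ hne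
  -- fibers of trim
  have hmaps : ∀ v ∈ LFin x n, trim σ v n ∈ WF x σ hne n := fun v hv => trim_mem hne h1 hv
  have hfib := Finset.sum_fiberwise_of_maps_to hmaps (fun u => ((eRF x u).card : ℤ) - 1)
  rw [← hfib]
  apply Finset.sum_le_sum
  intro w hw
  obtain ⟨hwf, hwne, hwtail, hwlen⟩ := mem_WF.mp hw
  have hwlen_le : w.length ≤ n := by
    have h2 : w.tail.length ≤ (appw σ w.tail).length := length_le_appw σ hne _
    have h3 : w.tail.length = w.length - 1 := by simp
    have h4 : 1 ≤ w.length := List.length_pos_iff.mpr hwne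
    omega
  have hNw : N ≤ w.length := by
    have h5 : (appw σ w).length ≤ width σ * w.length := length_appw_le σ w
    have h6 : N * width σ ≤ width σ * w.length := by omega
    rw [mul_comm] at h6
    exact Nat.le_of_mul_le_mul_left h6 (by omega)
  have hfilter : Finset.filter (fun v => trim σ v n = w) (LFin x n) = SF x w n := by
    ext v
    simp only [Finset.mem_filter, mem_SF]
    constructor
    · rintro ⟨hv, htr⟩
      exact ⟨mem_LFin.mp hv, htr ▸ trim_suffix σ v n⟩
    · rintro ⟨hv, hs⟩
      exact ⟨mem_LFin.mpr hv, trim_eq hne (mem_LFin.mpr hv) hw hs⟩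
  rw [hfilter]
  exact EXT a₀ N n hmult (n - w.length) w hwf hNw (by omega)

end Trim

-- ===== complexity recurrence =====
section Cplx

variable [Fintype A]

lemma cplx_eq (x : ℤ → A) (n : ℕ) : cplx x n = (LFin x n).card :=
  Set.ncard_eq_toFinset_card _ _

open Classical in
lemma LFin_filter_dropLast {x : ℤ → A} {n : ℕ} {v : List A} (hv : v ∈ LFin x n) :
    Finset.filter (fun u => u.dropLast = v) (LFin x (n + 1))
      = (eRF x v).image (fun b => v ++ [b]) := by
  obtain ⟨hf, hlen⟩ := mem_LFin.mp hv
  ext u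
  simp only [Finset.mem_filter, mem_LFin, Finset.mem_image, mem_eRF]
  constructor
  · rintro ⟨⟨hfu, hlenu⟩, hdrop⟩
    have hune : u ≠ [] := by
      intro h; rw [h] at hlenu; simp at hlenu
    refine ⟨u.getLast hune, ?_, ?_⟩
    · rw [← hdrop] at hf ⊢
      rw [List.dropLast_append_getLast hune]
      exact hfu
    · rw [← hdrop, List.dropLast_append_getLast hune]
  · rintro ⟨b, hb, rfl⟩
    refine ⟨⟨hb, by simp [hlen]⟩, List.dropLast_concat⟩

open Classical in
lemma cplx_rec (x : ℤ → A) (n : ℕ) :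
    ((LFin x (n + 1)).card : ℤ)
      = (LFin x n).card + ∑ v ∈ LFin x n, (((eRF x v).card : ℤ) - 1) := by
  have hmaps : ∀ u ∈ LFin x (n + 1), u.dropLast ∈ LFin x n := by
    intro u hu
    obtain ⟨hfu, hlenu⟩ := mem_LFin.mp hu
    refine mem_LFin.mpr ⟨isFactor_prefix hfu (List.dropLast_prefix u), ?_⟩
    simp [hlenu]
  rw [Finset.card_eq_sum_card_fiberwise hmaps]
  have hcongr : ∀ v ∈ LFin x n,
      (Finset.filter (fun u => u.dropLast = v) (LFin x (n + 1))).card = (eRF x v).card := by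
    intro v hv
    rw [LFin_filter_dropLast hv]
    apply Finset.card_image_of_injective
    intro b1 b2 h
    simpa using h
  rw [Finset.sum_congr rfl hcongr]
  push_cast
  rw [Finset.sum_sub_distrib, Finset.sum_const, nsmul_eq_mul, mul_one]
  ring

end Cplx

-- ===== covering layer =====
section Cov

variable [Fintype A]

def hdl (σ : A → List B) (w : List A) : ℕ := w.head?.elim 0 fun a => (σ a).length

@[simp] lemma hdl_cons (σ : A → List B) (a : A) (t : List A) :
    hdl σ (a :: t) = (σ a).length := rfl

lemma hdl_le_width (σ : A → List B) {w : List A} (hw : w ≠ []) : hdl σ w ≤ width σ := by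
  obtain ⟨a, t, rfl⟩ := List.exists_cons_of_ne_nil hw
  rw [hdl_cons]
  unfold width
  exact Finset.le_sup (f := fun a => (σ a).length) (Finset.mem_univ a)

lemma appw_eq_hdl_tail (σ : A → List B) {w : List A} (hw : w ≠ []) :
    (appw σ w).length = hdl σ w + (appw σ w.tail).length := by
  obtain ⟨a, t, rfl⟩ := List.exists_cons_of_ne_nil hw
  simp

lemma length_appw_dropLast_lt (σ : A → List B) (hne : ∀ a, σ a ≠ []) {w : List A}
    (hw : w ≠ []) : (appw σ w.dropLast).length < (appw σ w).length := by
  conv_rhs => rw [← List.dropLast_append_getLast hw]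
  rw [appw_append]
  have : 1 ≤ (appw σ [w.getLast hw]).length := by
    simp [appw]
    exact List.length_pos_iff.mpr (hne _)
  simp only [List.length_append]
  omega

def CovSet (σ : A → List B) (x : ℤ → A) (n : ℕ) : Set (List A × ℕ) :=
  {p : List A × ℕ |
    IsFactor x p.1 ∧ ∃ u : List B, u.length = n ∧ IsCovering σ u p.1 p.2}

lemma mem_CovSet {σ : A → List B} {x : ℤ → A} {n : ℕ} {p : List A × ℕ} :
    p ∈ CovSet σ x n ↔ IsFactor x p.1 ∧ p.1 ≠ [] ∧ 1 ≤ n ∧ p.2 + 1 ≤ hdl σ p.1 ∧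
      (appw σ p.1.dropLast).length < p.2 + n ∧ p.2 + n ≤ (appw σ p.1).length := by
  obtain ⟨w, k⟩ := p
  dsimp only [CovSet, Set.mem_setOf_eq]
  constructor
  · rintro ⟨hf, u, hulen, hwne, hune, hueq, hk1, hlast⟩
    have hn1 : 1 ≤ n := by
      rw [← hulen]
      exact List.length_pos_iff.mpr hune
    have hlen := congrArg List.length hueq
    rw [List.length_take, List.length_drop] at hlen
    refine ⟨hf, hwne, hn1, hk1, ?_, ?_⟩
    · rw [← hulen]; exact hlast
    · dsimp only at hlen; omega
  · rintro ⟨hf, hwne, hn1, hk1, hdl', hkn⟩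
    refine ⟨hf, ((appw σ w).drop k).take n, ?_, hwne, ?_, ?_, hk1, ?_⟩
    · rw [List.length_take, List.length_drop]; omega
    · intro h
      have := congrArg List.length h
      rw [List.length_take, List.length_drop] at this
      simp at this
      omega
    · have hl : (((appw σ w).drop k).take n).length = n := by
        rw [List.length_take, List.length_drop]; omega
      rw [hl]
    · have hl : (((appw σ w).drop k).take n).length = n := by
        rw [List.length_take, List.length_drop]; omega
      rw [hl]
      exact hdl'

lemma CovSet_finite (σ : A → List B) (x : ℤ → A) (hne : ∀ a, σ a ≠ []) (n : ℕ) :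
    (CovSet σ x n).Finite := by
  apply Set.Finite.subset (Set.Finite.prod (List.finite_length_le A (n + width σ))
    (Set.finite_Iic (width σ)))
  rintro ⟨w, k⟩ hp
  obtain ⟨hf, hwne, hn1, hk1, hdl', hkn⟩ := mem_CovSet.mp hp
  dsimp only at hf hwne hn1 hk1 hdl' hkn
  have hhd : hdl σ w ≤ width σ := hdl_le_width σ hwne
  have hdls : w.dropLast.length ≤ (appw σ w.dropLast).length := length_le_appw σ hne _
  have hwl : w.dropLast.length = w.length - 1 := List.length_dropLast
  have h1 : 1 ≤ w.length := List.length_pos_iff.mpr hwne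
  constructor
  · simp only [Set.mem_setOf_eq]
    omega
  · simp only [Set.mem_Iic]
    omega

noncomputable def CovF (σ : A → List B) (x : ℤ → A) (hne : ∀ a, σ a ≠ []) (n : ℕ) :
    Finset (List A × ℕ) := (CovSet_finite σ x hne n).toFinset

lemma mem_CovF {σ : A → List B} {x : ℤ → A} {hne : ∀ a, σ a ≠ []} {n : ℕ} {p : List A × ℕ} :
    p ∈ CovF σ x hne n ↔ IsFactor x p.1 ∧ p.1 ≠ [] ∧ 1 ≤ n ∧ p.2 + 1 ≤ hdl σ p.1 ∧
      (appw σ p.1.dropLast).length < p.2 + n ∧ p.2 + n ≤ (appw σ p.1).length := by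
  rw [CovF, Set.Finite.mem_toFinset]
  exact mem_CovSet

lemma ccount_eq (σ : A → List B) (x : ℤ → A) (hne : ∀ a, σ a ≠ []) (n : ℕ) :
    ccount σ x n = (CovF σ x hne n).card :=
  Set.ncard_eq_toFinset_card _ _

end Cov

-- ===== covering recurrence =====
section CovRec

variable [Fintype A]

open Classical in
lemma cov_rec (σ : A → List B) (x : ℤ → A) (hne : ∀ a, σ a ≠ []) {n : ℕ} (h1 : 1 ≤ n) :
    ((CovF σ x hne (n + 1)).card : ℤ)
      = (CovF σ x hne n).card + ∑ v ∈ WF x σ hne n, (((eRF x v).card : ℤ) - 1) := by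
  classical
  set Ψ : List A × ℕ → List A × ℕ :=
    fun p => if (appw σ p.1.dropLast).length = p.2 + n then (p.1.dropLast, p.2) else p with hΨ
  -- Ψ maps CovF (n+1) into CovF n
  have hmaps : ∀ p ∈ CovF σ x hne (n + 1), Ψ p ∈ CovF σ x hne n := by
    rintro ⟨w, k⟩ hp
    obtain ⟨hf, hwne, -, hk1, hdl', hkn⟩ := mem_CovF.mp hp
    dsimp only at hf hwne hk1 hdl' hkn
    by_cases hc : (appw σ w.dropLast).length = k + n
    · have hΨp : Ψ (w, k) = (w.dropLast, k) := by simp [hΨ, hc]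
      rw [hΨp]
      have hdne : w.dropLast ≠ [] := by
        intro h
        rw [h] at hc
        simp at hc
        omega
      have hhead : w.head? = w.dropLast.head? := by
        conv_lhs => rw [← List.dropLast_append_getLast hwne]
        exact List.head?_append_of_ne_nil _ hdne
      refine mem_CovF.mpr ⟨?_, hdne, h1, ?_, ?_, ?_⟩
      · exact isFactor_prefix hf (List.dropLast_prefix w)
      · dsimp only
        unfold hdl
        rw [← hhead]
        exact hk1
      · dsimp only
        have := length_appw_dropLast_lt σ hne hdne
        omega
      · dsimp only
        omega
    · have hΨp : Ψ (w, k) = (w, k) := by simp [hΨ, hc]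
      rw [hΨp]
      exact mem_CovF.mpr ⟨hf, hwne, h1, hk1, by dsimp only; omega, by dsimp only; omega⟩
  -- fiber sizes
  have hfiber : ∀ q ∈ CovF σ x hne n,
      (Finset.filter (fun p => Ψ p = q) (CovF σ x hne (n + 1))).card
        = if (appw σ q.1).length = q.2 + n then (eRF x q.1).card else 1 := by
    rintro ⟨v, k⟩ hq
    obtain ⟨hf, hvne, -, hk1, hdl', hkn⟩ := mem_CovF.mp hq
    dsimp only at hf hvne hk1 hdl' hkn ⊢
    by_cases hb : (appw σ v).length = k + n
    · rw [if_pos hb]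
      have himg : Finset.filter (fun p => Ψ p = (v, k)) (CovF σ x hne (n + 1))
          = (eRF x v).image (fun b => (v ++ [b], k)) := by
        ext ⟨w, k'⟩
        simp only [Finset.mem_filter, Finset.mem_image, mem_eRF]
        constructor
        · rintro ⟨hp, hΨeq⟩
          obtain ⟨hfw, hwne, -, hk1', hdl'', hkn'⟩ := mem_CovF.mp hp
          dsimp only at hfw hwne hk1' hdl'' hkn'
          by_cases hc : (appw σ w.dropLast).length = k' + n
          · have : (w.dropLast, k') = (v, k) := by
              rw [hΨ] at hΨeq
              simpa [hc] using hΨeq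
            obtain ⟨hdrop, hkk⟩ := Prod.ext_iff.mp this
            dsimp only at hdrop hkk
            refine ⟨w.getLast hwne, ?_, ?_⟩
            · rw [← hdrop, List.dropLast_append_getLast hwne]
              exact hfw
            · rw [← hdrop, ← hkk, List.dropLast_append_getLast hwne]
          · have : (w, k') = (v, k) := by
              rw [hΨ] at hΨeq
              simpa [hc] using hΨeq
            have hww : w = v := (Prod.ext_iff.mp this).1
            have hkk : k' = k := (Prod.ext_iff.mp this).2
            exfalso
            rw [hww, hkk] at hkn'
            omega
        · rintro ⟨b, hb', heq⟩
          obtain ⟨rfl, rfl⟩ : v ++ [b] = w ∧ k = k' := Prod.ext_iff.mp heq |>.imp id id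
          have hwne2 : v ++ [b] ≠ [] := by simp
          have hdrop : (v ++ [b]).dropLast = v := List.dropLast_concat
          have hhead : (v ++ [b]).head? = v.head? := List.head?_append_of_ne_nil _ hvne
          have hσb : 1 ≤ (σ b).length := List.length_pos_iff.mpr (hne b)
          have hlen2 : (appw σ (v ++ [b])).length = (appw σ v).length + (σ b).length := by
            rw [appw_append]; simp [appw]
          constructor
          · refine mem_CovF.mpr ⟨?_, hwne2, by omega, ?_, ?_, ?_⟩
            · exact hb'
            · dsimp only
              unfold hdl
              rw [hhead]
              exact hk1
            · dsimp only
              rw [hdrop]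
              omega
            · dsimp only
              omega
          · rw [hΨ]
            have hcond : (appw σ (v ++ [b]).dropLast).length = k + n := by
              rw [hdrop]; exact hb
            simp only [hcond, if_pos]
            rw [hdrop]
      rw [himg]
      apply Finset.card_image_of_injective
      intro b1 b2 h
      have := (Prod.ext_iff.mp h).1
      simpa using this
    · rw [if_neg hb]
      rw [Finset.card_eq_one]
      refine ⟨(v, k), ?_⟩
      rw [Finset.eq_singleton_iff_unique_mem]
      constructor
      · refine Finset.mem_filter.mpr ⟨mem_CovF.mpr ⟨hf, hvne, by omega, hk1, by dsimp only; omega,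
          by dsimp only; omega⟩, ?_⟩
        rw [hΨ]
        have hcond : ¬ (appw σ v.dropLast).length = k + n := by omega
        simp only [hcond, if_false]
      · rintro ⟨w, k'⟩ hp
        obtain ⟨hp1, hΨeq⟩ := Finset.mem_filter.mp hp
        obtain ⟨hfw, hwne, -, hk1', hdl'', hkn'⟩ := mem_CovF.mp hp1
        dsimp only at hfw hwne hk1' hdl'' hkn'
        by_cases hc : (appw σ w.dropLast).length = k' + n
        · exfalso
          have : (w.dropLast, k') = (v, k) := by
            rw [hΨ] at hΨeq
            simpa [hc] using hΨeq
          obtain ⟨hdrop, hkk⟩ := Prod.ext_iff.mp this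
          dsimp only at hdrop hkk
          rw [hdrop, hkk] at hc
          omega
        · rw [hΨ] at hΨeq
          simpa [hc] using hΨeq
  have hcard : (CovF σ x hne (n+1)).card
      = ∑ q ∈ CovF σ x hne n, (if (appw σ q.1).length = q.2 + n then (eRF x q.1).card else 1) := by
    rw [Finset.card_eq_sum_card_fiberwise hmaps]
    exact Finset.sum_congr rfl hfiber
  rw [hcard, Nat.cast_sum]
  have h0 : ∀ q ∈ CovF σ x hne n,
      (((if (appw σ q.1).length = q.2 + n then (eRF x q.1).card else 1 : ℕ)) : ℤ)
        = 1 + (if (appw σ q.1).length = q.2 + n then ((eRF x q.1).card : ℤ) - 1 else 0) := by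
    intro q _
    split <;> push_cast <;> ring
  rw [Finset.sum_congr rfl h0, Finset.sum_add_distrib, Finset.sum_const, nsmul_eq_mul, mul_one,
    ← Finset.sum_filter]
  congr 1
  apply Finset.sum_nbij' (i := fun q => q.1) (j := fun v => (v, (appw σ v).length - n))
  · rintro ⟨v, k⟩ hq
    obtain ⟨hq1, hb⟩ := Finset.mem_filter.mp hq
    obtain ⟨hf, hvne, -, hk1, hdl', hkn⟩ := mem_CovF.mp hq1
    dsimp only at hf hvne hk1 hdl' hkn hb ⊢
    have htl := appw_eq_hdl_tail σ hvne
    refine mem_WF.mpr ⟨hf, hvne, by omega, by omega⟩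
  · intro v hv
    obtain ⟨hf, hvne, htl', hlenv⟩ := mem_WF.mp hv
    have htl := appw_eq_hdl_tail σ hvne
    have hdll := length_appw_dropLast_lt σ hne hvne
    refine Finset.mem_filter.mpr ⟨mem_CovF.mpr ⟨hf, hvne, h1, by dsimp only; omega,
      by dsimp only; omega, by dsimp only; omega⟩, by dsimp only; omega⟩
  · rintro ⟨v, k⟩ hq
    obtain ⟨hq1, hb⟩ := Finset.mem_filter.mp hq
    dsimp only at hb ⊢
    simp only [Prod.mk.injEq]
    exact ⟨trivial, by omega⟩
  · intro v _
    rfl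
  · intro q _
    rfl

end CovRec

end Aux

theorem stmt6 [Fintype A] [Fintype B] (hA : 2 ≤ Fintype.card A) (hB : 2 ≤ Fintype.card B)
    (x : ℤ → A) (hx : Function.Surjective x)
    (σ : A → List B) (hne : ∀ a, σ a ≠ []) (hcov : ∀ b, ∃ a, b ∈ σ a)
    (N : ℕ) (hN : EvThreshold x (fun w => 0 ≤ mult x w) N) :
    ∃ C : ℤ, ∀ n : ℕ, max 1 (N * width σ) ≤ n →
      (ccount σ x n : ℤ) ≤ C + cplx x n := by
  classical
  have hA0 : 0 < Fintype.card A := by omega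
  obtain ⟨a₀⟩ : Nonempty A := Fintype.card_pos_iff.mp hA0
  have hmult : ∀ w, IsFactor x w → N ≤ w.length → 0 ≤ mult x w := fun w hw hl => hN.1 w hw hl
  set n₀ := max 1 (N * width σ) with hn₀
  refine ⟨(ccount σ x n₀ : ℤ) - cplx x n₀, ?_⟩
  have hstep : ∀ n, 1 ≤ n → N * width σ ≤ n →
      (ccount σ x (n + 1) : ℤ) + cplx x n ≤ ccount σ x n + cplx x (n + 1) := by
    intro n h1 h2
    have hc1 : (ccount σ x (n + 1) : ℤ) = ((Aux.CovF σ x hne (n + 1)).card : ℤ) := by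
      rw [Aux.ccount_eq σ x hne]
    have hc0 : (ccount σ x n : ℤ) = ((Aux.CovF σ x hne n).card : ℤ) := by
      rw [Aux.ccount_eq σ x hne]
    have hp1 : (cplx x (n + 1) : ℤ) = ((Aux.LFin x (n + 1)).card : ℤ) := by
      rw [Aux.cplx_eq]
    have hp0 : (cplx x n : ℤ) = ((Aux.LFin x n).card : ℤ) := by
      rw [Aux.cplx_eq]
    have hrec := Aux.cov_rec σ x hne h1
    have hprec := Aux.cplx_rec x n
    have hkey := Aux.key3 a₀ hne hmult h1 h2
    rw [hc1, hc0, hp1, hp0, hrec, hprec]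
    linarith
  intro n hn
  induction n, hn using Nat.le_induction with
  | base => linarith
  | succ m hm ih =>
    have h1 : 1 ≤ m := le_trans (le_max_left _ _) hm
    have h2 : N * width σ ≤ m := le_trans (le_max_right _ _) hm
    have hs := hstep m h1 h2
    linarith
end
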